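/- arXiv:2312.14690 — 9 statements merged into one kernel-verified Lean document; each statement's English description precedes it below -/
import Mathlib

section
/- The inner-level solution map is Lipschitz: for all x, x' ∈ ℝⁿ one has ‖θ*(x) − θ*(x')‖ ≤ L_{θ*} ‖x − x'‖, where L_{θ*} := C_{g,xθ}/μ_g. -/
noncomputable section

open Set

open scoped RealInnerProductSpace

section Aux

variable {E : Type*} [NormedAddCommGroup E] [InnerProductSpace ℝ E] [CompleteSpace E]

lemma aux_hasDerivAt_line {f : E → ℝ} {g u v : E} {t : ℝ}
    (hf : HasGradientAt f g (u + t • (v - u))) :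
    HasDerivAt (fun s : ℝ => f (u + s • (v - u))) ⟪g, v - u⟫ t := by
  have hc : HasDerivAt (fun s : ℝ => u + s • (v - u)) (v - u) t := by
    simpa using ((hasDerivAt_id t).smul_const (v - u)).const_add u
  have := (hasGradientAt_iff_hasFDerivAt.mp hf).comp_hasDerivAt t hc
  exact this

lemma aux_convex_first_order {f : E → ℝ} (hf : ConvexOn ℝ univ f)
    {u v g : E} (hg : HasGradientAt f g u) :
    f u + ⟪g, v - u⟫ ≤ f v := by
  set φ : ℝ → ℝ := fun s => f (u + s • (v - u)) with hφ
  have hφc : ConvexOn ℝ univ φ := by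
    have := hf.comp_affineMap
      (AffineMap.lineMap u v : ℝ →ᵃ[ℝ] E)
    have heq : (f ∘ (AffineMap.lineMap u v : ℝ →ᵃ[ℝ] E)) = φ := by
      funext s
      simp [φ, AffineMap.lineMap_apply, add_comm, sub_eq_add_neg]
    rw [heq] at this
    simpa using this
  have hd : HasDerivAt φ ⟪g, v - u⟫ 0 := by
    apply aux_hasDerivAt_line
    simpa using hg
  have := hφc.le_slope_of_hasDerivAt (mem_univ (0:ℝ)) (mem_univ (1:ℝ)) one_pos hd
  have hslope : slope φ 0 1 = f v - f u := by
    simp [slope, φ]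
  rw [hslope] at this
  linarith

lemma aux_sc_first_order {f : E → ℝ} {μ : ℝ} (hf : StrongConvexOn univ μ f)
    {u v g : E} (hg : HasGradientAt f g u) :
    f u + ⟪g, v - u⟫ + μ / 2 * ‖v - u‖ ^ 2 ≤ f v := by
  have hconv : ConvexOn ℝ univ (fun w => f w - μ / 2 * ‖w‖ ^ 2) :=
    strongConvexOn_iff_convex.mp hf
  have hg2 : HasGradientAt (fun w => f w - μ / 2 * ‖w‖ ^ 2) (g - μ • u) u := by
    rw [hasGradientAt_iff_hasFDerivAt] at hg ⊢
    have h1 : HasFDerivAt (fun w : E => ⟪w, w⟫)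
        ((fderivInnerCLM ℝ ((id u : E), (id u : E))).comp
          ((ContinuousLinearMap.id ℝ E).prod (ContinuousLinearMap.id ℝ E))) u :=
      (hasFDerivAt_id u).inner ℝ (hasFDerivAt_id u)
    have h2 : HasFDerivAt (fun w : E => μ / 2 * ‖w‖ ^ 2)
        ((InnerProductSpace.toDual ℝ E) (μ • u)) u := by
      have heq : (fun w : E => μ / 2 * ‖w‖ ^ 2) = fun w : E => (μ / 2) * ⟪w, w⟫ := by
        funext w; rw [real_inner_self_eq_norm_sq]
      rw [heq]
      have := h1.const_mul (μ / 2)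
      convert this using 1
      · rfl
      · ext; rfl
      ext w
      simp [fderivInnerCLM_apply, real_inner_smul_left]
      rw [real_inner_comm]
      ring
    have := hg.sub h2
    convert this using 1
    · rfl
    · ext; rfl
    · rfl
    simp [map_sub]
  have h := aux_convex_first_order hconv hg2 (v := v)
  have hinner : ⟪g - μ • u, v - u⟫ = ⟪g, v - u⟫ - μ * ⟪u, v - u⟫ := by
    rw [inner_sub_left, real_inner_smul_left]
  have hnorm : ‖v - u‖ ^ 2 = ‖v‖ ^ 2 - 2 * ⟪u, v⟫ + ‖u‖ ^ 2 := by
    rw [← real_inner_self_eq_norm_sq, ← real_inner_self_eq_norm_sq,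
      ← real_inner_self_eq_norm_sq, inner_sub_sub_self]
    rw [real_inner_comm v u]
    ring
  have hinner2 : ⟪u, v - u⟫ = ⟪u, v⟫ - ‖u‖ ^ 2 := by
    rw [inner_sub_right, real_inner_self_eq_norm_sq]
  rw [hinner, hinner2] at h
  have e : μ / 2 * ‖v - u‖ ^ 2 = μ / 2 * ‖v‖ ^ 2 - μ * ⟪u, v⟫ + μ / 2 * ‖u‖ ^ 2 := by
    rw [hnorm]; ring
  linarith [h, e]

lemma aux_strong_mono {f : E → ℝ} {μ : ℝ} (hf : StrongConvexOn univ μ f)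
    {u v gu gv : E} (hgu : HasGradientAt f gu u) (hgv : HasGradientAt f gv v) :
    μ * ‖u - v‖ ^ 2 ≤ ⟪gu - gv, u - v⟫ := by
  have h1 := aux_sc_first_order hf hgu (v := v)
  have h2 := aux_sc_first_order hf hgv (v := u)
  have e1 : ⟪gu, v - u⟫ = -⟪gu, u - v⟫ := by
    rw [← inner_neg_right]; congr 1; abel
  have e2 : ‖v - u‖ = ‖u - v‖ := norm_sub_rev _ _
  rw [e1, e2] at h1
  rw [inner_sub_left]
  linarith [h1, h2]

end Aux

/-- **Lipschitz continuity of the inner-level solution map.**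
If `g : ℝⁿ × ℝᵖ → ℝ` is twice continuously differentiable, `θ ↦ g(x,θ)` is
`μ_g`-strongly convex for every `x`, `θ*(x)` is the minimizer of `g(x,·)`,
`gradθg` is the `θ`-gradient of `g` and `Jxθg x θ` (the mixed second derivative
`∇²_{xθ}g(x,θ)`, i.e. the derivative in `x` of the `θ`-gradient) has operator
norm at most `C_{g,xθ}`, then `‖θ*(x) − θ*(x')‖ ≤ (C_{g,xθ}/μ_g) ‖x − x'‖`. -/
theorem stmt_0 {n p : ℕ}
    (g : EuclideanSpace ℝ (Fin n) → EuclideanSpace ℝ (Fin p) → ℝ)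
    (θs : EuclideanSpace ℝ (Fin n) → EuclideanSpace ℝ (Fin p))
    (μg Cgxθ : ℝ) (hμg : 0 < μg)
    (hgC2 : ContDiff ℝ 2 (Function.uncurry g))
    (hgSC : ∀ x, StrongConvexOn univ μg (g x))
    (hθs : ∀ x, IsMinOn (g x) univ (θs x))
    (gradθg : EuclideanSpace ℝ (Fin n) → EuclideanSpace ℝ (Fin p) →
      EuclideanSpace ℝ (Fin p))
    (hgradθg : ∀ x θ, HasGradientAt (g x) (gradθg x θ) θ)
    (Jxθg : EuclideanSpace ℝ (Fin n) → EuclideanSpace ℝ (Fin p) →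
      (EuclideanSpace ℝ (Fin n) →L[ℝ] EuclideanSpace ℝ (Fin p)))
    (hJxθg : ∀ x θ, HasFDerivAt (fun x' => gradθg x' θ) (Jxθg x θ) x)
    (hJbound : ∀ x θ, ‖Jxθg x θ‖ ≤ Cgxθ) :
    ∀ x x', ‖θs x - θs x'‖ ≤ (Cgxθ / μg) * ‖x - x'‖ := by
  intro x x'
  set a := θs x
  set b := θs x'
  have hC : 0 ≤ Cgxθ := le_trans (norm_nonneg _) (hJbound x a)
  -- gradient vanishes at the minimizers
  have hzero : ∀ y, gradθg y (θs y) = 0 := by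
    intro y
    have hloc : IsLocalMin (g y) (θs y) :=
      (hθs y).isLocalMin (Filter.univ_mem)
    have := hloc.hasFDerivAt_eq_zero ((hgradθg y (θs y)).hasFDerivAt)
    have h0 : (InnerProductSpace.toDual ℝ (EuclideanSpace ℝ (Fin p))) (gradθg y (θs y))
        = (InnerProductSpace.toDual ℝ (EuclideanSpace ℝ (Fin p))) 0 := by
      simpa using this
    exact (InnerProductSpace.toDual ℝ _).injective h0
  -- strong monotonicity at x
  have hmono : μg * ‖a - b‖ ^ 2 ≤ ⟪gradθg x a - gradθg x b, a - b⟫ :=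
    aux_strong_mono (hgSC x) (hgradθg x a) (hgradθg x b)
  have ha0 : gradθg x a = 0 := hzero x
  have hb0 : gradθg x' b = 0 := hzero x'
  -- Lipschitz bound on x ↦ gradθg x b
  have hlip : ‖gradθg x' b - gradθg x b‖ ≤ Cgxθ * ‖x' - x‖ := by
    have := convex_univ.norm_image_sub_le_of_norm_hasFDerivWithin_le
      (f := fun y => gradθg y b) (f' := fun y => Jxθg y b)
      (fun y _ => (hJxθg y b).hasFDerivWithinAt)
      (fun y _ => hJbound y b) (mem_univ x) (mem_univ x')
    exact this
  -- combine
  have key : μg * ‖a - b‖ ^ 2 ≤ Cgxθ * ‖x - x'‖ * ‖a - b‖ := by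
    have h1 : ⟪gradθg x a - gradθg x b, a - b⟫
        = ⟪gradθg x' b - gradθg x b, a - b⟫ := by
      rw [ha0, hb0]
    have h2 : ⟪gradθg x' b - gradθg x b, a - b⟫
        ≤ ‖gradθg x' b - gradθg x b‖ * ‖a - b‖ := real_inner_le_norm _ _
    have h3 : ‖gradθg x' b - gradθg x b‖ * ‖a - b‖ ≤ Cgxθ * ‖x - x'‖ * ‖a - b‖ := by
      have : ‖x' - x‖ = ‖x - x'‖ := norm_sub_rev _ _
      rw [this] at hlip
      exact mul_le_mul_of_nonneg_right hlip (norm_nonneg _)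
    calc μg * ‖a - b‖ ^ 2 ≤ ⟪gradθg x a - gradθg x b, a - b⟫ := hmono
      _ = _ := h1
      _ ≤ _ := h2
      _ ≤ _ := h3
  rcases eq_or_lt_of_le (norm_nonneg (a - b)) with h0 | h0
  · rw [← h0]
    positivity
  · rw [div_mul_eq_mul_div, le_div_iff₀ hμg]
    nlinarith [key, h0, norm_nonneg (x - x')]
end
end

section
/- Define v*(x) := [∇²_{θθ}g(x,θ*(x))]⁻¹ ∇_θ f(x,θ*(x)). Then v* is Lipschitz: for all x, x' ∈ ℝⁿ, ‖v*(x) − v*(x')‖ ≤ L_{v*} ‖x − x'‖, where L_{v*} := (L_{f,θ}/μ_g + C_{f,θ} L_{g,θθ}/μ_g²)(1 + C_{g,xθ}/μ_g). -/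
noncomputable section

open Set


open InnerProductSpace

local notation "⟪" x ", " y "⟫" => @inner ℝ _ _ x y

variable {E : Type*} [NormedAddCommGroup E] [InnerProductSpace ℝ E] [CompleteSpace E]

lemma aux_line_deriv (a v : E) (t : ℝ) :
    HasDerivAt (fun t : ℝ => a + t • v) v t := by
  simpa using ((hasDerivAt_id t).smul_const v).const_add a

lemma convexOn_inner_grad_le {φ : E → ℝ} (hφ : ConvexOn ℝ univ φ) {G a : E}
    (hG : HasGradientAt φ G a) (b : E) : ⟪G, b - a⟫ ≤ φ b - φ a := by
  have h0 : a + (0:ℝ) • (b - a) = a := by simp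
  have hF : HasDerivAt (fun t : ℝ => φ (a + t • (b - a))) ⟪G, b - a⟫ 0 := by
    have h := HasFDerivAt.comp_hasDerivAt (x := (0:ℝ))
      (by rw [h0]; exact hG.hasFDerivAt) (aux_line_deriv a (b - a) 0)
    simpa [Function.comp_def, toDual_apply_apply] using h
  have hmem : Ioc (0:ℝ) 1 ∈ nhdsWithin (0:ℝ) (Ioi 0) :=
    Ioc_mem_nhdsGT_of_mem (by constructor <;> norm_num)
  have hb : ∀ᶠ t in nhdsWithin (0:ℝ) (Ioi 0),
      slope (fun t : ℝ => φ (a + t • (b - a))) 0 t ≤ φ b - φ a := by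
    filter_upwards [hmem] with t ht
    have h1 : a + t • (b - a) = (1 - t) • a + t • b := by
      rw [smul_sub, sub_smul, one_smul]; abel
    have h2 := hφ.2 (mem_univ a) (mem_univ b)
      (by linarith [ht.2] : (0:ℝ) ≤ 1 - t) ht.1.le (by ring)
    rw [slope_def_field]
    simp only [zero_smul, add_zero, sub_zero, h1]
    rw [div_le_iff₀ ht.1]
    have := h2
    simp only [smul_eq_mul] at this
    nlinarith [this]
  have htend : Filter.Tendsto (slope (fun t : ℝ => φ (a + t • (b - a))) 0)
      (nhdsWithin (0:ℝ) (Ioi 0)) (nhds ⟪G, b - a⟫) :=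
    (hasDerivAt_iff_tendsto_slope.mp hF).mono_left
      (nhdsWithin_mono 0 (fun t ht => ne_of_gt ht))
  exact le_of_tendsto htend hb

lemma hasGradientAt_half_normSq (μ : ℝ) (θ : E) :
    HasGradientAt (fun θ : E => μ / 2 * ‖θ‖ ^ 2) (μ • θ) θ := by
  have h2 : HasFDerivAt (fun θ : E => ⟪θ, θ⟫)
      ((fderivInnerCLM ℝ (θ, θ)).comp ((ContinuousLinearMap.id ℝ E).prod
        (ContinuousLinearMap.id ℝ E))) θ :=
    (hasFDerivAt_id θ).inner ℝ (hasFDerivAt_id θ)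
  have h3 : HasFDerivAt (fun θ : E => μ / 2 * ‖θ‖ ^ 2) (toDual ℝ E (μ • θ)) θ := by
    have h4 := h2.const_mul (μ / 2)
    have heq : (fun θ : E => μ / 2 * ‖θ‖ ^ 2) = fun θ : E => μ / 2 * ⟪θ, θ⟫ := by
      funext y; rw [real_inner_self_eq_norm_sq]
    rw [heq]
    convert h4 using 1
    · rfl
    · rfl
    ext v
    simp [fderivInnerCLM_apply, toDual_apply_apply, real_inner_smul_left, real_inner_comm]
    ring
  exact h3

lemma strong_mono {h : E → ℝ} {μ : ℝ} (hsc : StrongConvexOn univ μ h)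
    {grad : E → E} (hg : ∀ θ, HasGradientAt h (grad θ) θ) (a b : E) :
    μ * ‖a - b‖ ^ 2 ≤ ⟪grad a - grad b, a - b⟫ := by
  have hφ : ConvexOn ℝ univ (fun θ => h θ - μ / 2 * ‖θ‖ ^ 2) :=
    strongConvexOn_iff_convex.mp hsc
  have hgφ : ∀ θ : E, HasGradientAt (fun θ => h θ - μ / 2 * ‖θ‖ ^ 2)
      (grad θ - μ • θ) θ := by
    intro θ
    have h1 := hasGradientAt_half_normSq (E := E) μ θ
    have := (hg θ).hasFDerivAt.sub h1.hasFDerivAt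
    have heq : toDual ℝ E (grad θ) - toDual ℝ E (μ • θ) = toDual ℝ E (grad θ - μ • θ) :=
      (map_sub _ _ _).symm
    rw [heq] at this
    exact this
  have k1 := convexOn_inner_grad_le hφ (hgφ a) b
  have k2 := convexOn_inner_grad_le hφ (hgφ b) a
  have e1 : ⟪grad a - μ • a, b - a⟫ + ⟪grad b - μ • b, a - b⟫ ≤ 0 := by linarith
  have e2 : ⟪grad b - μ • b, a - b⟫ = -⟪grad b - μ • b, b - a⟫ := by
    rw [← inner_neg_right]; congr 1; abel
  have e3 : ⟪grad a - grad b - μ • (a - b), b - a⟫ ≤ 0 := by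
    have : grad a - grad b - μ • (a - b) = (grad a - μ • a) - (grad b - μ • b) := by
      rw [smul_sub]; abel
    rw [this, inner_sub_left]; linarith
  have e4 : ⟪grad a - grad b, a - b⟫ - μ * ⟪a - b, a - b⟫ ≥ 0 := by
    have e4' : ⟪grad a - grad b - μ • (a - b), a - b⟫ ≥ 0 := by
      have heq : ⟪grad a - grad b - μ • (a - b), a - b⟫
          = -⟪grad a - grad b - μ • (a - b), b - a⟫ := by
        rw [← inner_neg_right]; congr 1; abel
      rw [heq]; linarith
    rw [inner_sub_left, real_inner_smul_left] at e4'
    linarith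
  rw [real_inner_self_eq_norm_sq] at e4
  linarith

lemma hessian_coercive {μ : ℝ} {grad : E → E} {H : E →L[ℝ] E} {θ : E}
    (hmono : ∀ a b : E, μ * ‖a - b‖ ^ 2 ≤ ⟪grad a - grad b, a - b⟫)
    (hH : HasFDerivAt grad H θ) (v : E) :
    μ * ‖v‖ ^ 2 ≤ ⟪H v, v⟫ := by
  have h0 : θ + (0:ℝ) • v = θ := by simp
  have hline : HasDerivAt (fun t : ℝ => grad (θ + t • v)) (H v) 0 := by
    have h := HasFDerivAt.comp_hasDerivAt (x := (0:ℝ))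
      (by rw [h0]; exact hH) (aux_line_deriv θ v 0)
    simpa [Function.comp_def] using h
  have hψ : HasDerivAt (fun t : ℝ => ⟪grad (θ + t • v), v⟫) ⟪H v, v⟫ 0 := by
    have := hline.inner ℝ (hasDerivAt_const 0 v)
    simpa using this
  have hb : ∀ᶠ t in nhdsWithin (0:ℝ) (Ioi 0),
      μ * ‖v‖ ^ 2 ≤ slope (fun t : ℝ => ⟪grad (θ + t • v), v⟫) 0 t := by
    filter_upwards [self_mem_nhdsWithin] with t ht
    have hmt := hmono (θ + t • v) θ
    have h1 : θ + t • v - θ = t • v := by abel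
    rw [h1] at hmt
    rw [slope_def_field]
    simp only [zero_smul, add_zero, sub_zero]
    rw [le_div_iff₀ ht]
    have h2 : ⟪grad (θ + t • v) - grad θ, t • v⟫
        = t * (⟪grad (θ + t • v), v⟫ - ⟪grad θ, v⟫) := by
      rw [real_inner_smul_right, inner_sub_left]
      try ring
    have h3 : ‖t • v‖ ^ 2 = t ^ 2 * ‖v‖ ^ 2 := by
      rw [norm_smul, mul_pow, Real.norm_eq_abs, sq_abs]
    rw [h2, h3] at hmt
    have ht' : (0:ℝ) < t := ht
    nlinarith [hmt]
  have htend : Filter.Tendsto (slope (fun t : ℝ => ⟪grad (θ + t • v), v⟫) 0)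
      (nhdsWithin (0:ℝ) (Ioi 0)) (nhds ⟪H v, v⟫) :=
    (hasDerivAt_iff_tendsto_slope.mp hψ).mono_left
      (nhdsWithin_mono 0 (fun t ht => ne_of_gt ht))
  exact ge_of_tendsto htend hb

lemma inverse_facts {E : Type*} [NormedAddCommGroup E] [InnerProductSpace ℝ E]
    [FiniteDimensional ℝ E] (T : E →L[ℝ] E) {μ : ℝ} (hμ : 0 < μ)
    (hT : ∀ v, μ * ‖v‖ ^ 2 ≤ ⟪T v, v⟫) :
    (∀ z, T.inverse (T z) = z) ∧ (∀ w, T (T.inverse w) = w) ∧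
      (∀ w, ‖T.inverse w‖ ≤ μ⁻¹ * ‖w‖) := by
  have hinj : Function.Injective T := by
    intro u v huv
    have h := hT (u - v)
    rw [map_sub, huv, sub_self] at h
    rw [inner_zero_left] at h
    have h2 : ‖u - v‖ ^ 2 ≤ 0 := by nlinarith
    have h3 : ‖u - v‖ = 0 := by nlinarith [norm_nonneg (u - v), sq_nonneg ‖u - v‖]
    rwa [norm_sub_eq_zero_iff] at h3
  have hinj' : Function.Injective T.toLinearMap := hinj
  have hsurj : Function.Surjective T.toLinearMap :=
    LinearMap.injective_iff_surjective.mp hinj'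
  let e₀ : E ≃ₗ[ℝ] E := LinearEquiv.ofBijective T.toLinearMap ⟨hinj', hsurj⟩
  let e : E ≃L[ℝ] E := e₀.toContinuousLinearEquiv
  have hcoe : (e : E →L[ℝ] E) = T := by ext v; rfl
  have hinvT : T.inverse = (e.symm : E →L[ℝ] E) := by
    rw [← hcoe, ContinuousLinearMap.inverse_equiv]
  have happly : ∀ w, T (T.inverse w) = w := by
    intro w
    rw [hinvT]
    have : T (e.symm w) = e (e.symm w) := by rw [← hcoe]; rfl
    rw [ContinuousLinearEquiv.coe_coe, this, e.apply_symm_apply]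
  refine ⟨?_, happly, ?_⟩
  · intro z
    apply hinj
    rw [happly]
  · intro w
    set z := T.inverse w with hz
    have hw : T z = w := happly w
    have h1 : μ * ‖z‖ ^ 2 ≤ ⟪T z, z⟫ := hT z
    rw [hw] at h1
    have h2 : ⟪w, z⟫ ≤ ‖w‖ * ‖z‖ := real_inner_le_norm w z
    rcases eq_or_lt_of_le (norm_nonneg z) with h0 | h0
    · rw [← h0]; positivity
    · have h4 : μ * ‖z‖ ≤ ‖w‖ := by nlinarith
      rw [← mul_le_mul_iff_right₀ hμ]
      calc μ * ‖z‖ ≤ ‖w‖ := h4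
        _ = μ * (μ⁻¹ * ‖w‖) := by field_simp


/-- **Lipschitz continuity of `v*(x) := [∇²_{θθ}g(x,θ*(x))]⁻¹ ∇_θ f(x,θ*(x))`.**
Under strong convexity of `g(x,·)`, joint Lipschitz continuity of `∇_θ f`
(constant `L_{f,θ}`) and of `∇²_{θθ}g` (constant `L_{g,θθ}`), the bound
`‖∇²_{xθ}g(x,θ)‖ ≤ C_{g,xθ}` and `‖∇_θ f(x,θ*(x))‖ ≤ C_{f,θ}`, one has
`‖v*(x) − v*(x')‖ ≤ (L_{f,θ}/μ_g + C_{f,θ}L_{g,θθ}/μ_g²)(1 + C_{g,xθ}/μ_g)‖x−x'‖`. -/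
theorem stmt_2 {n p : ℕ}
    (f g : EuclideanSpace ℝ (Fin n) → EuclideanSpace ℝ (Fin p) → ℝ)
    (θs : EuclideanSpace ℝ (Fin n) → EuclideanSpace ℝ (Fin p))
    (μg Lfθ Lgθθ Cfθ Cgxθ : ℝ) (hμg : 0 < μg)
    (hgC2 : ContDiff ℝ 2 (Function.uncurry g))
    (hgSC : ∀ x, StrongConvexOn univ μg (g x))
    (hθs : ∀ x, IsMinOn (g x) univ (θs x))
    (gradθg gradθf : EuclideanSpace ℝ (Fin n) → EuclideanSpace ℝ (Fin p) →
      EuclideanSpace ℝ (Fin p))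
    (hgradθg : ∀ x θ, HasGradientAt (g x) (gradθg x θ) θ)
    (hgradθf : ∀ x θ, HasGradientAt (f x) (gradθf x θ) θ)
    (Hθθg : EuclideanSpace ℝ (Fin n) → EuclideanSpace ℝ (Fin p) →
      (EuclideanSpace ℝ (Fin p) →L[ℝ] EuclideanSpace ℝ (Fin p)))
    (hHθθg : ∀ x θ, HasFDerivAt (gradθg x) (Hθθg x θ) θ)
    (Jxθg : EuclideanSpace ℝ (Fin n) → EuclideanSpace ℝ (Fin p) →
      (EuclideanSpace ℝ (Fin n) →L[ℝ] EuclideanSpace ℝ (Fin p)))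
    (hJxθg : ∀ x θ, HasFDerivAt (fun x' => gradθg x' θ) (Jxθg x θ) x)
    (hLfθ : ∀ x x' θ θ', ‖gradθf x θ - gradθf x' θ'‖ ≤ Lfθ * (‖x - x'‖ + ‖θ - θ'‖))
    (hLgθθ : ∀ x x' θ θ', ‖Hθθg x θ - Hθθg x' θ'‖ ≤ Lgθθ * (‖x - x'‖ + ‖θ - θ'‖))
    (hCgxθ : ∀ x θ, ‖Jxθg x θ‖ ≤ Cgxθ)
    (hCfθ : ∀ x, ‖gradθf x (θs x)‖ ≤ Cfθ)
    (vstar : EuclideanSpace ℝ (Fin n) → EuclideanSpace ℝ (Fin p))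
    (hvstar : ∀ x, vstar x = (Hθθg x (θs x)).inverse (gradθf x (θs x))) :
    ∀ x x', ‖vstar x - vstar x'‖ ≤
      (Lfθ / μg + Cfθ * Lgθθ / μg ^ 2) * (1 + Cgxθ / μg) * ‖x - x'‖ := by
  intro x x'
  rcases eq_or_ne x x' with rfl | hne
  · simp
  have hdpos : 0 < ‖x - x'‖ := by
    rw [norm_pos_iff]; exact sub_ne_zero.mpr hne
  set d : ℝ := ‖x - x'‖ with hd
  -- nonnegativity of constants
  have hLf0 : 0 ≤ Lfθ := by
    have := hLfθ x x' 0 0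
    have h0 := norm_nonneg (gradθf x 0 - gradθf x' 0)
    simp only [sub_self, norm_zero, add_zero] at this
    nlinarith
  have hLg0 : 0 ≤ Lgθθ := by
    have := hLgθθ x x' 0 0
    have h0 := norm_nonneg (Hθθg x 0 - Hθθg x' 0)
    simp only [sub_self, norm_zero, add_zero] at this
    nlinarith
  have hCg0 : 0 ≤ Cgxθ := le_trans (norm_nonneg _) (hCgxθ x (θs x))
  have hCf0 : 0 ≤ Cfθ := le_trans (norm_nonneg _) (hCfθ x)
  -- gradient vanishes at the minimizer
  have hzero : ∀ y, gradθg y (θs y) = 0 := by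
    intro y
    have hmin : IsLocalMin (g y) (θs y) := (hθs y).isLocalMin Filter.univ_mem
    have h0 := hmin.hasFDerivAt_eq_zero (hgradθg y (θs y)).hasFDerivAt
    have := (InnerProductSpace.toDual ℝ (EuclideanSpace ℝ (Fin p))).map_eq_zero_iff.mp h0
    exact this
  -- strong monotonicity of the gradient in θ
  have hmono : ∀ y (a b : EuclideanSpace ℝ (Fin p)),
      μg * ‖a - b‖ ^ 2 ≤ ⟪gradθg y a - gradθg y b, a - b⟫ :=
    fun y => strong_mono (hgSC y) (hgradθg y)
  -- Hessian coercivity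
  have hcoer : ∀ y θ v, μg * ‖v‖ ^ 2 ≤ ⟪Hθθg y θ v, v⟫ :=
    fun y θ v => hessian_coercive (hmono y) (hHθθg y θ) v
  -- inverse facts
  have hinv := fun y θ => inverse_facts (Hθθg y θ) hμg (hcoer y θ)
  -- Lipschitz continuity of gradθg in x
  have hgradx : ∀ (θ : EuclideanSpace ℝ (Fin p)),
      ‖gradθg x θ - gradθg x' θ‖ ≤ Cgxθ * d := by
    intro θ
    exact (convex_univ).norm_image_sub_le_of_norm_hasFDerivWithin_le
      (fun y _ => (hJxθg y θ).hasFDerivWithinAt)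
      (fun y _ => hCgxθ y θ) (mem_univ x') (mem_univ x)
  -- Lipschitz continuity of θs
  have hθlip : ‖θs x - θs x'‖ ≤ Cgxθ / μg * d := by
    set a := θs x; set b := θs x'
    have h1 : μg * ‖a - b‖ ^ 2 ≤ ⟪gradθg x a - gradθg x b, a - b⟫ := hmono x a b
    have h2 : gradθg x a - gradθg x b = gradθg x' b - gradθg x b := by
      rw [hzero x, hzero x']
    rw [h2] at h1
    have h3 : ⟪gradθg x' b - gradθg x b, a - b⟫ ≤ ‖gradθg x' b - gradθg x b‖ * ‖a - b‖ :=
      real_inner_le_norm _ _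
    have h4 : ‖gradθg x' b - gradθg x b‖ ≤ Cgxθ * d := by
      rw [norm_sub_rev]; exact hgradx b
    rcases eq_or_lt_of_le (norm_nonneg (a - b)) with h0 | h0
    · rw [← h0]; positivity
    · have h5 : μg * ‖a - b‖ ≤ Cgxθ * d := by nlinarith
      rw [div_mul_eq_mul_div, le_div_iff₀ hμg]
      nlinarith
  -- assembly
  set A := Hθθg x (θs x) with hA
  set B := Hθθg x' (θs x') with hB
  set u := gradθf x (θs x) with hu
  set w := gradθf x' (θs x') with hw
  obtain ⟨hAleft, hAright, hAbound⟩ := hinv x (θs x)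
  obtain ⟨hBleft, hBright, hBbound⟩ := hinv x' (θs x')
  set dθ : ℝ := ‖θs x - θs x'‖ with hdθ
  have key : vstar x - vstar x'
      = A.inverse (u - w) + A.inverse ((B - A) (B.inverse w)) := by
    rw [hvstar x, hvstar x']
    have e1 : (B - A) (B.inverse w) = w - A (B.inverse w) := by
      rw [ContinuousLinearMap.sub_apply, hBright]
    rw [e1, map_sub, map_sub, hAleft]
    abel
  have hnu : ‖u - w‖ ≤ Lfθ * (d + dθ) := hLfθ x x' (θs x) (θs x')
  have hnBA : ‖B - A‖ ≤ Lgθθ * (d + dθ) := by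
    rw [norm_sub_rev]
    exact hLgθθ x x' (θs x) (θs x')
  have hnorm : ‖vstar x - vstar x'‖
      ≤ μg⁻¹ * (Lfθ * (d + dθ)) + μg⁻¹ * (Lgθθ * (d + dθ) * (μg⁻¹ * Cfθ)) := by
    rw [key]
    refine (norm_add_le _ _).trans (add_le_add ?_ ?_)
    · exact (hAbound _).trans (mul_le_mul_of_nonneg_left hnu (inv_pos.mpr hμg).le)
    · refine (hAbound _).trans ?_
      refine mul_le_mul_of_nonneg_left ?_ (inv_pos.mpr hμg).le
      calc ‖(B - A) (B.inverse w)‖ ≤ ‖B - A‖ * ‖B.inverse w‖ :=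
            (B - A).le_opNorm _
        _ ≤ Lgθθ * (d + dθ) * (μg⁻¹ * Cfθ) := by
            apply mul_le_mul hnBA ((hBbound w).trans ?_) (norm_nonneg _) ?_
            · exact mul_le_mul_of_nonneg_left (hCfθ x') (inv_pos.mpr hμg).le
            · positivity
  have hδ : d + dθ ≤ (1 + Cgxθ / μg) * d := by
    have : dθ ≤ Cgxθ / μg * d := hθlip
    nlinarith
  have hc0 : 0 ≤ Lfθ / μg + Cfθ * Lgθθ / μg ^ 2 := by positivity
  calc ‖vstar x - vstar x'‖
      ≤ μg⁻¹ * (Lfθ * (d + dθ)) + μg⁻¹ * (Lgθθ * (d + dθ) * (μg⁻¹ * Cfθ)) := hnorm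
    _ = (Lfθ / μg + Cfθ * Lgθθ / μg ^ 2) * (d + dθ) := by
        field_simp
    _ ≤ (Lfθ / μg + Cfθ * Lgθθ / μg ^ 2) * ((1 + Cgxθ / μg) * d) :=
        mul_le_mul_of_nonneg_left hδ hc0
    _ = (Lfθ / μg + Cfθ * Lgθθ / μg ^ 2) * (1 + Cgxθ / μg) * d := by ring
end
end

section
/- Define the surrogate hypergradient ∇̄f(x,θ) := ∇_x f(x,θ) − ∇²_{xθ}g(x,θ) v(x,θ), where v(x,θ) := [∇²_{θθ}g(x,θ)]⁻¹ ∇_θ f(x,θ). Then for all x, x' ∈ ℝⁿ, ‖∇̄f(x,θ*(x)) − ∇̄f(x',θ*(x'))‖ ≤ L_f (‖x − x'‖ + ‖θ*(x) − θ*(x')‖), where L_f := L_{f,x} + C_{g,xθ} L_v + C_{f,θ} L_{g,xθ}/μ_g and L_v := L_{f,θ}/μ_g + C_{f,θ} L_{g,θθ}/μ_g². -/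
noncomputable section

open Set


variable {E : Type*} [NormedAddCommGroup E] [InnerProductSpace ℝ E] [CompleteSpace E]

/-- Strong convexity with gradients implies strong monotonicity of the gradient. -/
lemma aux_strong_mono_s3 {μ : ℝ} {h : E → ℝ} {G : E → E}
    (hsc : StrongConvexOn univ μ h) (hG : ∀ θ, HasGradientAt h (G θ) θ) (a b : E) :
    μ * ‖b - a‖ ^ 2 ≤ inner ℝ (G b - G a) (b - a) := by
  set u := b - a with hu
  have hline : ∀ t : ℝ, HasDerivAt (fun s : ℝ => a + s • u) u t := by
    intro t
    simpa using ((hasDerivAt_id t).smul_const u).const_add a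
  have hψ : ∀ t : ℝ, HasDerivAt (fun s : ℝ => h (a + s • u))
      (inner ℝ (G (a + t • u)) u : ℝ) t := by
    intro t
    have := (hG (a + t • u)).hasFDerivAt.comp_hasDerivAt t (hline t)
    simpa [InnerProductSpace.toDual_apply_apply, Function.comp_def] using this
  set c : ℝ := μ / 2 * ‖u‖ ^ 2 with hc
  have hχd : ∀ t : ℝ, HasDerivAt (fun s : ℝ => h (a + s • u) - c * s ^ 2)
      ((inner ℝ (G (a + t • u)) u : ℝ) - c * (2 * t)) t := by
    intro t
    have h2 : HasDerivAt (fun s : ℝ => c * s ^ 2) (c * (2 * t)) t := by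
      simpa using (hasDerivAt_pow 2 t).const_mul c
    exact (hψ t).sub h2
  have hconv : ConvexOn ℝ univ (fun s : ℝ => h (a + s • u) - c * s ^ 2) := by
    refine ⟨convex_univ, ?_⟩
    intro s _ t _ p q hp hq hpq
    have key := hsc.2 (mem_univ (a + s • u)) (mem_univ (a + t • u)) hp hq hpq
    have h1 : p • (a + s • u) + q • (a + t • u) = a + (p * s + q * t) • u := by
      rw [smul_add, smul_add, smul_smul, smul_smul, add_add_add_comm, ← add_smul, hpq,
        one_smul, ← add_smul]
    have h2 : ‖(a + s • u) - (a + t • u)‖ = |s - t| * ‖u‖ := by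
      rw [add_sub_add_left_eq_sub, ← sub_smul, norm_smul, Real.norm_eq_abs]
    rw [h1, h2] at key
    have hq' : q = 1 - p := by linarith
    simp only [smul_eq_mul] at key ⊢
    have habs : (|s - t| * ‖u‖) ^ 2 = (s - t) ^ 2 * ‖u‖ ^ 2 := by
      rw [mul_pow, sq_abs]
    rw [habs] at key
    have hid : c * (p*s+q*t)^2 = p*(c*s^2) + q*(c*t^2) - p*q*(c*(s-t)^2) := by
      subst hq'; ring
    have hid2 : p*q*(c*(s-t)^2) = p*q*(μ/2*((s-t)^2*‖u‖^2)) := by rw [hc]; ring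
    linarith [key, hid, hid2]
  have h01 :=
    (hconv.le_slope_of_hasDerivAt (mem_univ (0:ℝ)) (mem_univ (1:ℝ)) one_pos (hχd 0)).trans
    (hconv.slope_le_of_hasDerivAt (mem_univ (0:ℝ)) (mem_univ (1:ℝ)) one_pos (hχd 1))
  have hab : a + (1:ℝ) • u = b := by rw [one_smul, hu]; abel
  have ha0 : a + (0:ℝ) • u = a := by simp
  rw [ha0, hab] at h01
  have hinner : (inner ℝ (G b - G a) (b - a) : ℝ) = inner ℝ (G b) u - inner ℝ (G a) u := by
    rw [← hu, inner_sub_left]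
  rw [hinner]
  nlinarith [h01]

/-- Strong monotonicity of `G` implies coercivity of its derivative. -/
lemma aux_coercive {μ : ℝ} {G : E → E} {θ : E} {H : E →L[ℝ] E}
    (hmono : ∀ a b : E, μ * ‖b - a‖ ^ 2 ≤ inner ℝ (G b - G a) (b - a))
    (hH : HasFDerivAt G H θ) (u : E) :
    μ * ‖u‖ ^ 2 ≤ inner ℝ u (H u) := by
  set q : ℝ → ℝ := fun t => inner ℝ u (G (θ + t • u)) with hqdef
  have hline : HasDerivAt (fun s : ℝ => θ + s • u) u 0 := by
    simpa using ((hasDerivAt_id (0:ℝ)).smul_const u).const_add θ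
  have h1 : HasDerivAt (fun t : ℝ => G (θ + t • u)) (H u) 0 := by
    have hH' : HasFDerivAt G H (θ + (0:ℝ) • u) := by simpa using hH
    simpa [Function.comp_def] using hH'.comp_hasDerivAt 0 hline
  have hq : HasDerivAt q (inner ℝ u (H u) : ℝ) 0 := by
    have := (innerSL ℝ u).hasFDerivAt.comp_hasDerivAt 0 h1
    simpa [hqdef, Function.comp_def] using this
  have hslope : ∀ t ∈ Set.Ioi (0:ℝ), μ * ‖u‖ ^ 2 ≤ slope q 0 t := by
    intro t ht
    have ht' : (0:ℝ) < t := ht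
    have key := hmono θ (θ + t • u)
    have h2 : θ + t • u - θ = t • u := by abel
    rw [h2] at key
    have h3 : (inner ℝ (G (θ + t • u) - G θ) (t • u) : ℝ) = t * (q t - q 0) := by
      simp only [hqdef, inner_sub_left, real_inner_smul_right, zero_smul, add_zero]
      rw [real_inner_comm u (G (θ + t • u)), real_inner_comm u (G θ)]
      ring
    have h4 : ‖t • u‖ ^ 2 = t ^ 2 * ‖u‖ ^ 2 := by
      rw [norm_smul, mul_pow, Real.norm_eq_abs, sq_abs]
    rw [h3, h4] at key
    rw [slope_def_field, sub_zero, le_div_iff₀ ht']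
    nlinarith [key]
  have htend := hasDerivAt_iff_tendsto_slope.mp hq
  have hsub : Set.Ioi (0:ℝ) ⊆ {(0:ℝ)}ᶜ := fun y hy => ne_of_gt hy
  refine ge_of_tendsto (htend.mono_left (nhdsWithin_mono _ hsub)) ?_
  filter_upwards [self_mem_nhdsWithin] with t ht using hslope t ht

/-- Coercive operators on finite-dimensional spaces: `inverse` is a genuine inverse. -/
lemma aux_inverse [FiniteDimensional ℝ E] {μ : ℝ} (hμ : 0 < μ) (H : E →L[ℝ] E)
    (hc : ∀ u, μ * ‖u‖ ≤ ‖H u‖) (w : E) : H (H.inverse w) = w := by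
  have hinj : Function.Injective H := by
    intro a b hab
    have h1 : μ * ‖a - b‖ ≤ ‖H (a - b)‖ := hc _
    rw [map_sub, hab, sub_self, norm_zero] at h1
    have h2 : ‖a - b‖ ≤ 0 := by nlinarith [norm_nonneg (a - b)]
    have := le_antisymm h2 (norm_nonneg _)
    rwa [norm_eq_zero, sub_eq_zero] at this
  have hinj' : LinearMap.ker (H : E →ₗ[ℝ] E) = ⊥ := LinearMap.ker_eq_bot.mpr hinj
  have hsurj' : LinearMap.range (H : E →ₗ[ℝ] E) = ⊤ :=
    LinearMap.range_eq_top.mpr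
      (LinearMap.injective_iff_surjective.mp (LinearMap.ker_eq_bot.mp hinj'))
  let e := ContinuousLinearEquiv.ofBijective H hinj' hsurj'
  have he : (e : E →L[ℝ] E) = H := ContinuousLinearEquiv.coe_ofBijective _ _ _
  rw [← he, ContinuousLinearMap.inverse_equiv]
  exact e.apply_symm_apply w

set_option maxHeartbeats 1000000 in
/-- **Lipschitz-type continuity of the surrogate hypergradient**
`∇̄f(x,θ) := ∇_x f(x,θ) − ∇²_{xθ}g(x,θ) v(x,θ)` with
`v(x,θ) := [∇²_{θθ}g(x,θ)]⁻¹ ∇_θ f(x,θ)`, evaluated along the inner solution: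
`‖∇̄f(x,θ*(x)) − ∇̄f(x',θ*(x'))‖ ≤ L_f (‖x−x'‖ + ‖θ*(x)−θ*(x')‖)` with
`L_f := L_{f,x} + C_{g,xθ} L_v + C_{f,θ} L_{g,xθ}/μ_g` and
`L_v := L_{f,θ}/μ_g + C_{f,θ} L_{g,θθ}/μ_g²`.
Here `Jxθg x θ` is the derivative in `x` of the `θ`-gradient of `g`, so the
matrix `∇²_{xθ}g(x,θ)` acting on `ℝᵖ` is its adjoint. -/
theorem stmt_3 {n p : ℕ}
    (f g : EuclideanSpace ℝ (Fin n) → EuclideanSpace ℝ (Fin p) → ℝ)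
    (θs : EuclideanSpace ℝ (Fin n) → EuclideanSpace ℝ (Fin p))
    (μg Lfx Lfθ Lgxθ Lgθθ Cfθ Cgxθ : ℝ) (hμg : 0 < μg)
    (hgC2 : ContDiff ℝ 2 (Function.uncurry g))
    (hgSC : ∀ x, StrongConvexOn univ μg (g x))
    (hθs : ∀ x, IsMinOn (g x) univ (θs x))
    (gradθg gradθf : EuclideanSpace ℝ (Fin n) → EuclideanSpace ℝ (Fin p) →
      EuclideanSpace ℝ (Fin p))
    (gradxf : EuclideanSpace ℝ (Fin n) → EuclideanSpace ℝ (Fin p) →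
      EuclideanSpace ℝ (Fin n))
    (hgradθg : ∀ x θ, HasGradientAt (g x) (gradθg x θ) θ)
    (hgradθf : ∀ x θ, HasGradientAt (f x) (gradθf x θ) θ)
    (hgradxf : ∀ x θ, HasGradientAt (fun x' => f x' θ) (gradxf x θ) x)
    (Hθθg : EuclideanSpace ℝ (Fin n) → EuclideanSpace ℝ (Fin p) →
      (EuclideanSpace ℝ (Fin p) →L[ℝ] EuclideanSpace ℝ (Fin p)))
    (hHθθg : ∀ x θ, HasFDerivAt (gradθg x) (Hθθg x θ) θ)
    (Jxθg : EuclideanSpace ℝ (Fin n) → EuclideanSpace ℝ (Fin p) →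
      (EuclideanSpace ℝ (Fin n) →L[ℝ] EuclideanSpace ℝ (Fin p)))
    (hJxθg : ∀ x θ, HasFDerivAt (fun x' => gradθg x' θ) (Jxθg x θ) x)
    (hLfx : ∀ x x' θ θ', ‖gradxf x θ - gradxf x' θ'‖ ≤ Lfx * (‖x - x'‖ + ‖θ - θ'‖))
    (hLfθ : ∀ x x' θ θ', ‖gradθf x θ - gradθf x' θ'‖ ≤ Lfθ * (‖x - x'‖ + ‖θ - θ'‖))
    (hLgxθ : ∀ x x' θ θ', ‖Jxθg x θ - Jxθg x' θ'‖ ≤ Lgxθ * (‖x - x'‖ + ‖θ - θ'‖))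
    (hLgθθ : ∀ x x' θ θ', ‖Hθθg x θ - Hθθg x' θ'‖ ≤ Lgθθ * (‖x - x'‖ + ‖θ - θ'‖))
    (hCgxθ : ∀ x θ, ‖Jxθg x θ‖ ≤ Cgxθ)
    (hCfθ : ∀ x, ‖gradθf x (θs x)‖ ≤ Cfθ)
    (v : EuclideanSpace ℝ (Fin n) → EuclideanSpace ℝ (Fin p) →
      EuclideanSpace ℝ (Fin p))
    (hv : ∀ x θ, v x θ = (Hθθg x θ).inverse (gradθf x θ))
    (barf : EuclideanSpace ℝ (Fin n) → EuclideanSpace ℝ (Fin p) →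
      EuclideanSpace ℝ (Fin n))
    (hbarf : ∀ x θ, barf x θ =
      gradxf x θ - (ContinuousLinearMap.adjoint (Jxθg x θ)) (v x θ)) :
    ∀ x x', ‖barf x (θs x) - barf x' (θs x')‖ ≤
      (Lfx + Cgxθ * (Lfθ / μg + Cfθ * Lgθθ / μg ^ 2) + Cfθ * Lgxθ / μg) *
        (‖x - x'‖ + ‖θs x - θs x'‖) := by
  intro x x'
  set d : ℝ := ‖x - x'‖ + ‖θs x - θs x'‖ with hd
  have hdnn : 0 ≤ d := add_nonneg (norm_nonneg _) (norm_nonneg _)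
  -- coercivity of the Hessian at every point
  have hcoer : ∀ y θ u, μg * ‖u‖ ≤ ‖Hθθg y θ u‖ := by
    intro y θ u
    have hmono := aux_strong_mono_s3 (hgSC y) (hgradθg y)
    have hco : μg * ‖u‖ ^ 2 ≤ inner ℝ u (Hθθg y θ u) :=
      aux_coercive (fun a b => hmono a b) (hHθθg y θ) u
    have hCS := real_inner_le_norm u (Hθθg y θ u)
    rcases eq_or_lt_of_le (norm_nonneg u) with h0 | h0
    · rw [← h0, mul_zero]; exact norm_nonneg _
    · nlinarith [hco, hCS]
  -- inverse identity
  have hHv : ∀ y, Hθθg y (θs y) (v y (θs y)) = gradθf y (θs y) := by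
    intro y
    rw [hv]
    exact aux_inverse hμg _ (hcoer y (θs y)) _
  -- bound on v
  have hvb : ∀ y, ‖v y (θs y)‖ ≤ Cfθ / μg := by
    intro y
    have h1 : μg * ‖v y (θs y)‖ ≤ ‖gradθf y (θs y)‖ := by
      have := hcoer y (θs y) (v y (θs y))
      rwa [hHv y] at this
    rw [le_div_iff₀ hμg]
    nlinarith [h1, hCfθ y]
  have hCfθnn : 0 ≤ Cfθ := (norm_nonneg _).trans (hCfθ x)
  have hCgxθnn : 0 ≤ Cgxθ := (norm_nonneg _).trans (hCgxθ x (θs x))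
  set a := v x (θs x) with ha
  set b := v x' (θs x') with hb
  set H := Hθθg x (θs x) with hH
  set H' := Hθθg x' (θs x') with hH'
  -- Lipschitz bound on v
  have hab : ‖a - b‖ ≤ (Lfθ / μg + Cfθ * Lgθθ / μg ^ 2) * d := by
    have e1 : H (a - b) = (gradθf x (θs x) - gradθf x' (θs x')) + ((H' - H) b) := by
      rw [map_sub, hHv x]
      rw [ContinuousLinearMap.sub_apply, hHv x']
      abel
    have e2 : ‖H (a - b)‖ ≤ Lfθ * d + Lgθθ * d * (Cfθ / μg) := by
      rw [e1]
      refine (norm_add_le _ _).trans (add_le_add (hLfθ x x' (θs x) (θs x')) ?_)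
      refine ((H' - H).le_opNorm b).trans ?_
      have h3 : ‖H' - H‖ ≤ Lgθθ * d := by
        have := hLgθθ x' x (θs x') (θs x)
        rwa [norm_sub_rev x' x, norm_sub_rev (θs x') (θs x)] at this
      exact mul_le_mul h3 (hvb x') (norm_nonneg _) ((norm_nonneg _).trans h3)
    have h4 : μg * ‖a - b‖ ≤ Lfθ * d + Lgθθ * d * (Cfθ / μg) :=
      (hcoer x (θs x) (a - b)).trans e2
    rw [show (Lfθ / μg + Cfθ * Lgθθ / μg ^ 2) * d
        = (Lfθ * d + Lgθθ * d * (Cfθ / μg)) / μg by field_simp]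
    rw [le_div_iff₀ hμg]
    linarith [h4]
  have habnn : 0 ≤ (Lfθ / μg + Cfθ * Lgθθ / μg ^ 2) * d := (norm_nonneg _).trans hab
  set A := Jxθg x (θs x) with hA
  set A' := Jxθg x' (θs x') with hA'
  have hsplit : barf x (θs x) - barf x' (θs x')
      = (gradxf x (θs x) - gradxf x' (θs x'))
        - ((ContinuousLinearMap.adjoint A) (a - b)
          + (ContinuousLinearMap.adjoint (A - A')) b) := by
    rw [hbarf x (θs x), hbarf x' (θs x')]
    simp only [map_sub, ContinuousLinearMap.sub_apply, ← ha, ← hb, ← hA, ← hA']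
    abel
  have n1 : ‖gradxf x (θs x) - gradxf x' (θs x')‖ ≤ Lfx * d := hLfx x x' (θs x) (θs x')
  have n2 : ‖(ContinuousLinearMap.adjoint A) (a - b)‖
      ≤ Cgxθ * ((Lfθ / μg + Cfθ * Lgθθ / μg ^ 2) * d) := by
    refine ((ContinuousLinearMap.adjoint A).le_opNorm _).trans ?_
    have hAn : ‖ContinuousLinearMap.adjoint A‖ ≤ Cgxθ := by
      rw [ContinuousLinearMap.adjoint.norm_map A]
      exact hCgxθ x (θs x)
    exact mul_le_mul hAn hab (norm_nonneg _) hCgxθnn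
  have n3 : ‖(ContinuousLinearMap.adjoint (A - A')) b‖ ≤ (Lgxθ * d) * (Cfθ / μg) := by
    refine ((ContinuousLinearMap.adjoint (A - A')).le_opNorm _).trans ?_
    have hAn : ‖ContinuousLinearMap.adjoint (A - A')‖ ≤ Lgxθ * d := by
      rw [ContinuousLinearMap.adjoint.norm_map (A - A')]
      exact hLgxθ x x' (θs x) (θs x')
    exact mul_le_mul hAn (hvb x') (norm_nonneg _) ((norm_nonneg _).trans hAn)
  have htri : ‖barf x (θs x) - barf x' (θs x')‖
      ≤ ‖gradxf x (θs x) - gradxf x' (θs x')‖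
        + (‖(ContinuousLinearMap.adjoint A) (a - b)‖
          + ‖(ContinuousLinearMap.adjoint (A - A')) b‖) := by
    rw [hsplit]
    exact (norm_sub_le _ _).trans (by gcongr; exact norm_add_le _ _)
  have hrhs : (Lfx + Cgxθ * (Lfθ / μg + Cfθ * Lgθθ / μg ^ 2) + Cfθ * Lgxθ / μg) * d
      = Lfx * d + Cgxθ * ((Lfθ / μg + Cfθ * Lgθθ / μg ^ 2) * d) + (Lgxθ * d) * (Cfθ / μg) := by
    field_simp
  refine le_trans (htri.trans (add_le_add n1 (add_le_add n2 n3))) (le_of_eq ?_)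
  rw [hrhs]
  ring
end
end

section
/- For every x ∈ ℝⁿ, the spread of the inner-level minimizers is bounded by the inner-level heterogeneity: (1/m)Σ_{i=1}^m Σ_{j=1}^m ‖θ_j*(x) − θ_i*(x)‖² ≤ b_g²/μ_g². -/
noncomputable section

open Set Finset

section Aux

open InnerProductSpace

variable {F : Type*} [NormedAddCommGroup F] [InnerProductSpace ℝ F] [CompleteSpace F]

lemma convex_grad_ineq {h : F → ℝ} (hc : ConvexOn ℝ Set.univ h) {G y : F}
    (hg : HasGradientAt h G y) (a : F) :
    h y + @inner ℝ _ _ G (a - y) ≤ h a := by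
  set φ : ℝ → ℝ := fun t => h (y + t • (a - y)) with hφ
  have hline : ∀ t : ℝ, HasDerivAt (fun t : ℝ => y + t • (a - y)) (a - y) t := by
    intro t
    simpa using ((hasDerivAt_id t).smul_const (a - y)).const_add y
  have hφd : HasDerivAt φ (@inner ℝ _ _ G (a - y)) 0 := by
    have hg' : HasFDerivAt h ((toDual ℝ F) G) (y + (0:ℝ) • (a - y)) := by
      simpa using hasGradientAt_iff_hasFDerivAt.mp hg
    have := hg'.comp_hasDerivAt (x := (0:ℝ)) (hline 0)
    simpa [φ, toDual_apply_apply, Function.comp_def] using this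
  have hφc : ConvexOn ℝ Set.univ φ := by
    have := hc.comp_affineMap (AffineMap.lineMap y a (k := ℝ))
    have hpre : (AffineMap.lineMap y a (k := ℝ)) ⁻¹' (Set.univ : Set F) = Set.univ := by simp
    rw [hpre] at this
    suffices hEq : φ = h ∘ ⇑(AffineMap.lineMap y a (k := ℝ)) by rw [hEq]; exact this
    ext t
    simp only [φ, Function.comp, AffineMap.lineMap_apply_module]
    congr 1
    module
  have := hφc.le_slope_of_hasDerivAt (Set.mem_univ (0:ℝ)) (Set.mem_univ (1:ℝ)) one_pos hφd
  have h01 : slope φ 0 1 = h a - h y := by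
    simp [slope, φ]
  rw [h01] at this
  linarith

lemma grad_sq_quad {f : F → ℝ} {μ : ℝ} {G z : F} (hg : HasGradientAt f G z) :
    HasGradientAt (fun w => f w - μ / 2 * ‖w‖ ^ 2) (G - μ • z) z := by
  have hsq : HasFDerivAt (fun w : F => μ / 2 * ‖w‖ ^ 2)
      ((toDual ℝ F) (μ • z)) z := by
    have := ((hasStrictFDerivAt_norm_sq z).hasFDerivAt).const_mul (μ / 2)
    refine this.congr_fderiv ?_
    ext w
    simp [real_inner_smul_left]
    ring
  have := (hasGradientAt_iff_hasFDerivAt.mp hg).sub hsq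
  rw [hasGradientAt_iff_hasFDerivAt, map_sub]
  exact this

lemma strong_min_key {f : F → ℝ} {μ : ℝ} (hμ : 0 < μ)
    (hf : StrongConvexOn Set.univ μ f) {a y G Ga : F}
    (hga : HasGradientAt f Ga a) (hmin : IsMinOn f Set.univ a)
    (hg : HasGradientAt f G y) :
    μ ^ 2 * ‖y - a‖ ^ 2 ≤ ‖G‖ ^ 2 := by
  have hGa : Ga = 0 := by
    have hloc : IsLocalMin f a := hmin.isLocalMin (by simp)
    have h0 : (toDual ℝ F) Ga = 0 := hloc.hasFDerivAt_eq_zero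
      (hasGradientAt_iff_hasFDerivAt.mp hga)
    have := (toDual ℝ F).injective (by simpa using h0)
    simpa using this
  subst hGa
  have hc : ConvexOn ℝ Set.univ (fun w => f w - μ / 2 * ‖w‖ ^ 2) :=
    strongConvexOn_iff_convex.mp hf
  have h1 := convex_grad_ineq hc (grad_sq_quad hg) a
  have h2 := convex_grad_ineq hc (grad_sq_quad hga) y
  have hkey : μ * ‖y - a‖ ^ 2 ≤ @inner ℝ _ _ G (y - a) := by
    have e1 : @inner ℝ _ _ (G - μ • y) (a - y) =
        @inner ℝ _ _ G (a - y) - μ * @inner ℝ _ _ y (a - y) := by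
      rw [inner_sub_left, real_inner_smul_left]
    have e2 : @inner ℝ _ _ ((0:F) - μ • a) (y - a) =
        - (μ * @inner ℝ _ _ a (y - a)) := by
      rw [inner_sub_left, real_inner_smul_left]; simp
    have e3 : @inner ℝ _ _ G (a - y) = - @inner ℝ _ _ G (y - a) := by
      rw [← inner_neg_right]; simp
    have e4 : ‖y - a‖ ^ 2 = @inner ℝ _ _ y (y - a) - @inner ℝ _ _ a (y - a) := by
      rw [← inner_sub_left, real_inner_self_eq_norm_sq]
    have e5 : @inner ℝ _ _ y (a - y) = - @inner ℝ _ _ y (y - a) := by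
      rw [← inner_neg_right]; simp
    nlinarith [h1, h2]
  have hcs : @inner ℝ _ _ G (y - a) ≤ ‖G‖ * ‖y - a‖ := real_inner_le_norm G (y - a)
  rcases eq_or_lt_of_le (norm_nonneg (y - a)) with h0 | h0
  · rw [← h0]; nlinarith [sq_nonneg ‖G‖]
  · have : μ * ‖y - a‖ ≤ ‖G‖ := by
      have := hkey.trans hcs
      rw [sq] at this
      nlinarith
    nlinarith [norm_nonneg G, norm_nonneg (y - a), mul_pos hμ h0]

lemma grad_zero_of_min {f : F → ℝ} {Ga a : F}
    (hga : HasGradientAt f Ga a) (hmin : IsMinOn f Set.univ a) : Ga = 0 := by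
  have hloc : IsLocalMin f a := hmin.isLocalMin (by simp)
  have h0 : (toDual ℝ F) Ga = 0 := hloc.hasFDerivAt_eq_zero
    (hasGradientAt_iff_hasFDerivAt.mp hga)
  simpa using (toDual ℝ F).injective (by simpa using h0)


end Aux

/-- **Spread of the inner-level minimizers.**  If each `g_i(x,·)` is
`μ_g`-strongly convex with minimizer `θ_i*(x)` and the inner-level
heterogeneity at the optima is bounded by `b_g²`, then
`(1/m) Σ_i Σ_j ‖θ_j*(x) − θ_i*(x)‖² ≤ b_g²/μ_g²`. -/
theorem stmt_7 {n p m : ℕ}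
    (g : Fin m → EuclideanSpace ℝ (Fin n) → EuclideanSpace ℝ (Fin p) → ℝ)
    (θs : Fin m → EuclideanSpace ℝ (Fin n) → EuclideanSpace ℝ (Fin p))
    (μg bg : ℝ) (hμg : 0 < μg)
    (hgSC : ∀ i x, StrongConvexOn univ μg (g i x))
    (hθs : ∀ i x, IsMinOn (g i x) univ (θs i x))
    (gradθg : Fin m → EuclideanSpace ℝ (Fin n) → EuclideanSpace ℝ (Fin p) →
      EuclideanSpace ℝ (Fin p))
    (hgradθg : ∀ i x θ, HasGradientAt (g i x) (gradθg i x θ) θ)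
    (hhet : ∀ x, (m : ℝ)⁻¹ *
      ∑ i, ∑ j, ‖gradθg i x (θs j x) - gradθg j x (θs j x)‖ ^ 2 ≤ bg ^ 2) :
    ∀ x, (m : ℝ)⁻¹ * ∑ i, ∑ j, ‖θs j x - θs i x‖ ^ 2 ≤ bg ^ 2 / μg ^ 2 := by
  intro x
  have hterm : ∀ i j : Fin m, ‖θs j x - θs i x‖ ^ 2 ≤
      μg⁻¹ ^ 2 * ‖gradθg i x (θs j x) - gradθg j x (θs j x)‖ ^ 2 := by
    intro i j
    have hz : gradθg j x (θs j x) = 0 :=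
      grad_zero_of_min (hgradθg j x (θs j x)) (hθs j x)
    have hk := strong_min_key hμg (hgSC i x) (hgradθg i x (θs i x)) (hθs i x)
      (hgradθg i x (θs j x))
    rw [hz, sub_zero]
    rw [inv_pow]
    have hμ2 : (0:ℝ) < μg ^ 2 := by positivity
    calc ‖θs j x - θs i x‖ ^ 2
        = (μg ^ 2)⁻¹ * (μg ^ 2 * ‖θs j x - θs i x‖ ^ 2) := by field_simp
      _ ≤ (μg ^ 2)⁻¹ * ‖gradθg i x (θs j x)‖ ^ 2 :=
          mul_le_mul_of_nonneg_left hk (by positivity)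
  have hsum : ∑ i, ∑ j, ‖θs j x - θs i x‖ ^ 2 ≤
      μg⁻¹ ^ 2 * ∑ i, ∑ j, ‖gradθg i x (θs j x) - gradθg j x (θs j x)‖ ^ 2 := by
    rw [mul_sum]
    refine sum_le_sum fun i _ => ?_
    rw [mul_sum]
    exact sum_le_sum fun j _ => hterm i j
  have hm : (0:ℝ) ≤ (m : ℝ)⁻¹ := by positivity
  calc (m : ℝ)⁻¹ * ∑ i, ∑ j, ‖θs j x - θs i x‖ ^ 2
      ≤ (m : ℝ)⁻¹ * (μg⁻¹ ^ 2 *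
        ∑ i, ∑ j, ‖gradθg i x (θs j x) - gradθg j x (θs j x)‖ ^ 2) :=
        mul_le_mul_of_nonneg_left hsum hm
    _ = μg⁻¹ ^ 2 * ((m : ℝ)⁻¹ *
        ∑ i, ∑ j, ‖gradθg i x (θs j x) - gradθg j x (θs j x)‖ ^ 2) := by ring
    _ ≤ μg⁻¹ ^ 2 * bg ^ 2 := by
        have := hhet x
        have hμ : (0:ℝ) ≤ μg⁻¹ ^ 2 := by positivity
        nlinarith
    _ = bg ^ 2 / μg ^ 2 := by
        field_simp
end
end

section
/- Hypergradient approximation error (averaged form): let x_1,…,x_m ∈ ℝⁿ, θ_1,…,θ_m ∈ ℝᵖ, v_1,…,v_m ∈ ℝᵖ, set x̄ := (1/m)Σ_i x_i and s̃_i := ∇_x f_i(x_i,θ_i) − ∇²_{xθ}g_i(x_i,θ_i) v_i. Then ‖∇Φ(x̄) − (1/m)Σ_{i=1}^m s̃_i‖² ≤ (L_{fg,x}/m) Σ_i ‖x_i − x̄‖² + (L_{fg,x}/m) Σ_i ‖θ_i − θ_i*(x̄)‖² + (4C²_{g,xθ}/m) Σ_i ‖v_i − v_i*(x̄)‖²,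 where L_{fg,x} := 2L²_{f,x} + 4M²L²_{g,xθ} and M := C_{f,θ}/μ_g. -/
noncomputable section

open Set Finset


variable {E : Type*} [NormedAddCommGroup E] [InnerProductSpace ℝ E] [CompleteSpace E]

/-- Strong subgradient inequality from strong convexity. -/
lemma my_strong_subgrad {f : E → ℝ} {μ : ℝ} (hf : StrongConvexOn univ μ f)
    {x y : E} {G : E} (hG : HasGradientAt f G x) :
    inner ℝ G (y - x) ≤ f y - f x - μ / 2 * ‖y - x‖ ^ 2 := by
  set d := y - x with hd
  have hq : HasDerivAt (fun t : ℝ => f (x + t • d)) (inner ℝ G d : ℝ) 0 := by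
    have hc : HasDerivAt (fun t : ℝ => x + t • d) d 0 := by
      simpa using ((hasDerivAt_id (0:ℝ)).smul_const d).const_add x
    have hfd : HasFDerivAt f (InnerProductSpace.toDual ℝ E G : E →L[ℝ] ℝ) (x + (0:ℝ) • d) := by
      simpa using (hasGradientAt_iff_hasFDerivAt.mp hG)
    have := hfd.comp_hasDerivAt 0 hc
    simp at this
    exact this
  have hbound : ∀ t : ℝ, t ∈ Ioo (0:ℝ) 1 →
      (f (x + t • d) - f (x + (0:ℝ) • d)) / (t - 0) ≤
        f y - f x - (1 - t) * (μ / 2 * ‖d‖ ^ 2) := by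
    intro t ht
    have h1 : f ((1 - t) • x + t • y) ≤
        (1 - t) • f x + t • f y - (1 - t) * t * (μ / 2 * ‖x - y‖ ^ 2) :=
      hf.2 (mem_univ x) (mem_univ y) (by linarith [ht.2]) ht.1.le (by ring)
    have hpt : (1 - t) • x + t • y = x + t • d := by
      rw [hd]; module
    have hnorm : ‖x - y‖ = ‖d‖ := by rw [hd, ← norm_neg]; congr 1; abel
    rw [hpt, hnorm] at h1
    simp only [smul_eq_mul, zero_smul, add_zero, sub_zero] at h1 ⊢
    rw [div_le_iff₀ ht.1]
    nlinarith [ht.1, ht.2]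
  have hslope : Filter.Tendsto (fun t : ℝ => (f (x + t • d) - f (x + (0:ℝ) • d)) / (t - 0))
      (nhdsWithin 0 (Ioi 0)) (nhds (inner ℝ G d : ℝ)) := by
    have := hq.tendsto_slope_zero_right
    simpa [div_eq_inv_mul] using this
  have hrhs : Filter.Tendsto (fun t : ℝ => f y - f x - (1 - t) * (μ / 2 * ‖d‖ ^ 2))
      (nhdsWithin 0 (Ioi 0)) (nhds (f y - f x - μ / 2 * ‖d‖ ^ 2)) := by
    have : Filter.Tendsto (fun t : ℝ => f y - f x - (1 - t) * (μ / 2 * ‖d‖ ^ 2))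
        (nhds 0) (nhds (f y - f x - (1 - 0) * (μ / 2 * ‖d‖ ^ 2))) := by
      exact Filter.Tendsto.const_sub _ (((continuous_const.sub continuous_id).mul continuous_const).tendsto 0)
    simpa using this.mono_left nhdsWithin_le_nhds
  refine le_of_tendsto_of_tendsto hslope hrhs ?_
  filter_upwards [Ioo_mem_nhdsGT_of_mem (by norm_num : (0:ℝ) ∈ Ico (0:ℝ) 1)] with t ht
  exact hbound t ht

/-- Strong monotonicity of the gradient. -/
lemma my_strong_mono {f : E → ℝ} {μ : ℝ} (hf : StrongConvexOn univ μ f)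
    {x y : E} {Gx Gy : E} (hGx : HasGradientAt f Gx x) (hGy : HasGradientAt f Gy y) :
    μ * ‖y - x‖ ^ 2 ≤ inner ℝ (Gy - Gx) (y - x) := by
  have h1 := my_strong_subgrad hf hGx (y := y)
  have h2 := my_strong_subgrad hf hGy (y := x)
  have hn : ‖x - y‖ = ‖y - x‖ := by rw [← norm_neg]; congr 1; abel
  have hx : x - y = -(y - x) := by abel
  rw [hn, hx, inner_neg_right] at h2
  rw [inner_sub_left]
  linarith

/-- Hessian coercivity from strong convexity. -/
lemma my_hess_coercive {f : E → ℝ} {μ : ℝ} (hf : StrongConvexOn univ μ f)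
    {G : E → E} (hG : ∀ θ, HasGradientAt f (G θ) θ)
    {θ0 : E} {H : E →L[ℝ] E} (hH : HasFDerivAt G H θ0) (w : E) :
    μ * ‖w‖ ^ 2 ≤ inner ℝ (H w) w := by
  have hq : HasDerivAt (fun t : ℝ => (inner ℝ w (G (θ0 + t • w) - G θ0) : ℝ))
      (inner ℝ w (H w) : ℝ) 0 := by
    have hc : HasDerivAt (fun t : ℝ => θ0 + t • w) w 0 := by
      simpa using ((hasDerivAt_id (0:ℝ)).smul_const w).const_add θ0
    have hH' : HasFDerivAt G H (θ0 + (0:ℝ) • w) := by simpa using hH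
    have hGc : HasDerivAt (fun t : ℝ => G (θ0 + t • w)) (H w) 0 :=
      hH'.comp_hasDerivAt 0 hc
    have h2 : HasDerivAt (fun t : ℝ => G (θ0 + t • w) - G θ0) (H w) 0 :=
      hGc.sub_const (G θ0)
    have := ((innerSL ℝ w).hasFDerivAt).comp_hasDerivAt 0 h2
    simp at this
    exact this
  have hbound : ∀ t : ℝ, t ∈ Ioo (0:ℝ) 1 →
      μ * ‖w‖ ^ 2 ≤ ((inner ℝ w (G (θ0 + t • w) - G θ0) : ℝ) - inner ℝ w (G (θ0 + (0:ℝ) • w) - G θ0)) / (t - 0) := by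
    intro t ht
    have hm := my_strong_mono hf (hG θ0) (hG (θ0 + t • w))
    have hd : θ0 + t • w - θ0 = t • w := by abel
    rw [hd, norm_smul] at hm
    have hA : (inner ℝ (G (θ0 + t • w) - G θ0) (t • w) : ℝ)
        = t * inner ℝ w (G (θ0 + t • w) - G θ0) := by
      rw [real_inner_smul_right, real_inner_comm]
    rw [hA] at hm
    have ht0 : 0 < t := ht.1
    have habs : ‖t‖ = t := by rw [Real.norm_eq_abs, abs_of_pos ht0]
    rw [habs] at hm
    simp only [zero_smul, add_zero, sub_self, inner_zero_right, sub_zero]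
    rw [le_div_iff₀ ht0]
    nlinarith [hm, ht0]
  have hslope : Filter.Tendsto
      (fun t : ℝ => ((inner ℝ w (G (θ0 + t • w) - G θ0) : ℝ) - inner ℝ w (G (θ0 + (0:ℝ) • w) - G θ0)) / (t - 0))
      (nhdsWithin 0 (Ioi 0)) (nhds (inner ℝ w (H w) : ℝ)) := by
    have := hq.tendsto_slope_zero_right
    simpa [div_eq_inv_mul] using this
  have key : μ * ‖w‖ ^ 2 ≤ (inner ℝ w (H w) : ℝ) := by
    refine ge_of_tendsto hslope ?_
    filter_upwards [Ioo_mem_nhdsGT_of_mem (by norm_num : (0:ℝ) ∈ Ico (0:ℝ) 1)] with t ht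
    exact hbound t ht
  rwa [real_inner_comm]

/-- Norm bound on `H.inverse u`. -/
lemma my_inverse_bound {H : E →L[ℝ] E} {μ : ℝ} (hμ : 0 < μ)
    (hcoer : ∀ w : E, μ * ‖w‖ ^ 2 ≤ inner ℝ (H w) w)
    {u : E} {C : ℝ} (hu : ‖u‖ ≤ C) :
    ‖H.inverse u‖ ≤ C / μ := by
  have hC : 0 ≤ C := le_trans (norm_nonneg u) hu
  by_cases h : H.IsInvertible
  · obtain ⟨e, he⟩ := h
    have hinv : H.inverse = (e.symm : E →L[ℝ] E) := by
      rw [← he, ContinuousLinearMap.inverse_equiv]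
    rw [hinv]
    show ‖e.symm u‖ ≤ C / μ
    set v : E := e.symm u with hv
    have hHv : H v = u := by
      rw [← he]; exact e.apply_symm_apply u
    have h1 : μ * ‖v‖ ^ 2 ≤ inner ℝ (H v) v := hcoer v
    rw [hHv] at h1
    have h2 : (inner ℝ u v : ℝ) ≤ ‖u‖ * ‖v‖ := real_inner_le_norm u v
    rcases eq_or_lt_of_le (norm_nonneg v) with hv0 | hv0
    · rw [← hv0]; positivity
    · rw [le_div_iff₀ hμ]
      have h3 : μ * ‖v‖ * ‖v‖ ≤ C * ‖v‖ := by
        nlinarith [le_trans h1 h2, mul_le_mul_of_nonneg_right hu (norm_nonneg v)]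
      exact le_of_mul_le_mul_right (by linarith) hv0
  · rw [ContinuousLinearMap.inverse_of_not_isInvertible h]
    simp; positivity

set_option maxHeartbeats 4000000 in
/-- **Hypergradient approximation error (averaged form).**
With `s̃_i := ∇_x f_i(x_i,θ_i) − ∇²_{xθ}g_i(x_i,θ_i) v_i` and `x̄ := (1/m)Σ_i x_i`,
`‖∇Φ(x̄) − (1/m)Σ_i s̃_i‖² ≤ (L_{fg,x}/m)Σ_i‖x_i − x̄‖² + (L_{fg,x}/m)Σ_i‖θ_i − θ_i*(x̄)‖²
  + (4C²_{g,xθ}/m)Σ_i‖v_i − v_i*(x̄)‖²`, where `L_{fg,x} := 2L²_{f,x} + 4M²L²_{g,xθ}`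
and `M := C_{f,θ}/μ_g`. -/
theorem stmt_10 {n p m : ℕ}
    (f g : Fin m → EuclideanSpace ℝ (Fin n) → EuclideanSpace ℝ (Fin p) → ℝ)
    (θs : Fin m → EuclideanSpace ℝ (Fin n) → EuclideanSpace ℝ (Fin p))
    (μg Lfx Lgxθ Cfθ Cgxθ : ℝ) (hμg : 0 < μg)
    (hgC2 : ∀ i, ContDiff ℝ 2 (Function.uncurry (g i)))
    (hgSC : ∀ i x, StrongConvexOn univ μg (g i x))
    (hθs : ∀ i x, IsMinOn (g i x) univ (θs i x))
    (gradθg gradθf : Fin m → EuclideanSpace ℝ (Fin n) →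
      EuclideanSpace ℝ (Fin p) → EuclideanSpace ℝ (Fin p))
    (gradxf : Fin m → EuclideanSpace ℝ (Fin n) → EuclideanSpace ℝ (Fin p) →
      EuclideanSpace ℝ (Fin n))
    (hgradθg : ∀ i x θ, HasGradientAt (g i x) (gradθg i x θ) θ)
    (hgradθf : ∀ i x θ, HasGradientAt (f i x) (gradθf i x θ) θ)
    (hgradxf : ∀ i x θ, HasGradientAt (fun x' => f i x' θ) (gradxf i x θ) x)
    (Hθθg : Fin m → EuclideanSpace ℝ (Fin n) → EuclideanSpace ℝ (Fin p) →
      (EuclideanSpace ℝ (Fin p) →L[ℝ] EuclideanSpace ℝ (Fin p)))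
    (hHθθg : ∀ i x θ, HasFDerivAt (gradθg i x) (Hθθg i x θ) θ)
    (Jxθg : Fin m → EuclideanSpace ℝ (Fin n) → EuclideanSpace ℝ (Fin p) →
      (EuclideanSpace ℝ (Fin n) →L[ℝ] EuclideanSpace ℝ (Fin p)))
    (hJxθg : ∀ i x θ, HasFDerivAt (fun x' => gradθg i x' θ) (Jxθg i x θ) x)
    (hLfx : ∀ i x x' θ θ', ‖gradxf i x θ - gradxf i x' θ'‖ ^ 2 ≤
      Lfx ^ 2 * (‖x - x'‖ ^ 2 + ‖θ - θ'‖ ^ 2))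
    (hLgxθ : ∀ i x x' θ θ', ‖Jxθg i x θ - Jxθg i x' θ'‖ ^ 2 ≤
      Lgxθ ^ 2 * (‖x - x'‖ ^ 2 + ‖θ - θ'‖ ^ 2))
    (hCgxθ : ∀ i x θ, ‖Jxθg i x θ‖ ≤ Cgxθ)
    (hCfθ : ∀ i x, ‖gradθf i x (θs i x)‖ ≤ Cfθ)
    -- hypergradients and their surrogates
    (vstar : Fin m → EuclideanSpace ℝ (Fin n) → EuclideanSpace ℝ (Fin p))
    (hvstar : ∀ i x, vstar i x =
      (Hθθg i x (θs i x)).inverse (gradθf i x (θs i x)))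
    (gradΦ : EuclideanSpace ℝ (Fin n) → EuclideanSpace ℝ (Fin n))
    (hgradΦ : ∀ x, gradΦ x = (m : ℝ)⁻¹ • ∑ i,
      (gradxf i x (θs i x) -
        (ContinuousLinearMap.adjoint (Jxθg i x (θs i x))) (vstar i x)))
    -- the points
    (xi : Fin m → EuclideanSpace ℝ (Fin n))
    (θi vi : Fin m → EuclideanSpace ℝ (Fin p))
    (xbar : EuclideanSpace ℝ (Fin n)) (hxbar : xbar = (m : ℝ)⁻¹ • ∑ i, xi i)
    (stilde : Fin m → EuclideanSpace ℝ (Fin n))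
    (hstilde : ∀ i, stilde i = gradxf i (xi i) (θi i) -
      (ContinuousLinearMap.adjoint (Jxθg i (xi i) (θi i))) (vi i)) :
    ‖gradΦ xbar - (m : ℝ)⁻¹ • ∑ i, stilde i‖ ^ 2 ≤
      ((2 * Lfx ^ 2 + 4 * (Cfθ / μg) ^ 2 * Lgxθ ^ 2) / m) *
        ∑ i, ‖xi i - xbar‖ ^ 2
      + ((2 * Lfx ^ 2 + 4 * (Cfθ / μg) ^ 2 * Lgxθ ^ 2) / m) *
        ∑ i, ‖θi i - θs i xbar‖ ^ 2
      + (4 * Cgxθ ^ 2 / m) * ∑ i, ‖vi i - vstar i xbar‖ ^ 2 := by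
  classical
  rcases Nat.eq_zero_or_pos m with hm | hm
  · subst hm
    simp [hgradΦ, hxbar]
  have hmR : (0:ℝ) < (m:ℝ) := by exact_mod_cast hm
  set i0 : Fin m := ⟨0, hm⟩
  have hCfθ0 : 0 ≤ Cfθ := le_trans (norm_nonneg _) (hCfθ i0 xbar)
  have hCg0 : 0 ≤ Cgxθ := le_trans (norm_nonneg _) (hCgxθ i0 xbar 0)
  set M : ℝ := Cfθ / μg with hM
  have hM0 : 0 ≤ M := div_nonneg hCfθ0 hμg.le
  set L : ℝ := 2 * Lfx ^ 2 + 4 * M ^ 2 * Lgxθ ^ 2 with hL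
  have hL0 : 0 ≤ L := by positivity
  -- bound on vstar
  have hvbound : ∀ i, ‖vstar i xbar‖ ≤ M := by
    intro i
    rw [hvstar]
    exact my_inverse_bound hμg
      (fun w => my_hess_coercive (hgSC i xbar) (fun θ => hgradθg i xbar θ)
        (hHθθg i xbar (θs i xbar)) w)
      (hCfθ i xbar)
  -- per-index error
  set a : Fin m → EuclideanSpace ℝ (Fin n) := fun i =>
    (gradxf i xbar (θs i xbar) -
      (ContinuousLinearMap.adjoint (Jxθg i xbar (θs i xbar))) (vstar i xbar)) - stilde i
    with ha
  have hai : ∀ i, ‖a i‖ ^ 2 ≤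
      L * (‖xi i - xbar‖ ^ 2 + ‖θi i - θs i xbar‖ ^ 2)
        + 4 * Cgxθ ^ 2 * ‖vi i - vstar i xbar‖ ^ 2 := by
    intro i
    set X : EuclideanSpace ℝ (Fin n) :=
      gradxf i xbar (θs i xbar) - gradxf i (xi i) (θi i) with hXdef
    set J1 := Jxθg i xbar (θs i xbar) with hJ1
    set J2 := Jxθg i (xi i) (θi i) with hJ2
    set B : EuclideanSpace ℝ (Fin n) :=
      (ContinuousLinearMap.adjoint J1 - ContinuousLinearMap.adjoint J2) (vstar i xbar) with hBdef
    set Cc : EuclideanSpace ℝ (Fin n) :=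
      (ContinuousLinearMap.adjoint J2) (vstar i xbar - vi i) with hCdef
    have hdecomp : a i = X - B - Cc := by
      simp only [ha, hstilde i, hXdef, hBdef, hCdef, ContinuousLinearMap.sub_apply, map_sub]
      abel
    have hdx : ‖xbar - xi i‖ = ‖xi i - xbar‖ := norm_sub_rev _ _
    have hdθ : ‖θs i xbar - θi i‖ = ‖θi i - θs i xbar‖ := norm_sub_rev _ _
    have hdv : ‖vstar i xbar - vi i‖ = ‖vi i - vstar i xbar‖ := norm_sub_rev _ _
    have hX : ‖X‖ ^ 2 ≤ Lfx ^ 2 * (‖xi i - xbar‖ ^ 2 + ‖θi i - θs i xbar‖ ^ 2) := by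
      have := hLfx i xbar (xi i) (θs i xbar) (θi i)
      rwa [hdx, hdθ] at this
    have hJnorm : ‖ContinuousLinearMap.adjoint J1 - ContinuousLinearMap.adjoint J2‖
        = ‖J1 - J2‖ := by
      rw [← map_sub (ContinuousLinearMap.adjoint :
        (EuclideanSpace ℝ (Fin n) →L[ℝ] EuclideanSpace ℝ (Fin p)) ≃ₗᵢ⋆[ℝ] _) J1 J2]
      exact LinearIsometryEquiv.norm_map _ _
    have hJ : ‖J1 - J2‖ ^ 2 ≤ Lgxθ ^ 2 * (‖xi i - xbar‖ ^ 2 + ‖θi i - θs i xbar‖ ^ 2) := by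
      have := hLgxθ i xbar (xi i) (θs i xbar) (θi i)
      rwa [hdx, hdθ] at this
    have hB : ‖B‖ ≤ ‖J1 - J2‖ * M := by
      rw [hBdef]
      calc ‖(ContinuousLinearMap.adjoint J1 - ContinuousLinearMap.adjoint J2) (vstar i xbar)‖
          ≤ ‖ContinuousLinearMap.adjoint J1 - ContinuousLinearMap.adjoint J2‖ * ‖vstar i xbar‖ :=
            ContinuousLinearMap.le_opNorm _ _
        _ ≤ ‖J1 - J2‖ * M := by
            rw [hJnorm]
            exact mul_le_mul_of_nonneg_left (hvbound i) (norm_nonneg _)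
    have hC : ‖Cc‖ ≤ Cgxθ * ‖vi i - vstar i xbar‖ := by
      rw [hCdef]
      calc ‖(ContinuousLinearMap.adjoint J2) (vstar i xbar - vi i)‖
          ≤ ‖ContinuousLinearMap.adjoint J2‖ * ‖vstar i xbar - vi i‖ :=
            ContinuousLinearMap.le_opNorm _ _
        _ ≤ Cgxθ * ‖vi i - vstar i xbar‖ := by
            rw [hdv, LinearIsometryEquiv.norm_map]
            exact mul_le_mul_of_nonneg_right (hCgxθ i (xi i) (θi i)) (norm_nonneg _)
    have htri : ‖a i‖ ≤ ‖X‖ + ‖B‖ + ‖Cc‖ := by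
      rw [hdecomp]
      calc ‖X - B - Cc‖ ≤ ‖X - B‖ + ‖Cc‖ := norm_sub_le _ _
        _ ≤ ‖X‖ + ‖B‖ + ‖Cc‖ := by
            have := norm_sub_le X B; linarith
    have hB2 : ‖B‖ ^ 2 ≤ M ^ 2 * (Lgxθ ^ 2 * (‖xi i - xbar‖ ^ 2 + ‖θi i - θs i xbar‖ ^ 2)) := by
      have h1 : ‖B‖ ^ 2 ≤ (‖J1 - J2‖ * M) ^ 2 :=
        pow_le_pow_left₀ (norm_nonneg B) hB 2
      calc ‖B‖ ^ 2 ≤ (‖J1 - J2‖ * M) ^ 2 := h1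
        _ = M ^ 2 * ‖J1 - J2‖ ^ 2 := by ring
        _ ≤ M ^ 2 * (Lgxθ ^ 2 * (‖xi i - xbar‖ ^ 2 + ‖θi i - θs i xbar‖ ^ 2)) := by
            exact mul_le_mul_of_nonneg_left hJ (by positivity)
    have hC2 : ‖Cc‖ ^ 2 ≤ Cgxθ ^ 2 * ‖vi i - vstar i xbar‖ ^ 2 := by
      have h1 : ‖Cc‖ ^ 2 ≤ (Cgxθ * ‖vi i - vstar i xbar‖) ^ 2 :=
        pow_le_pow_left₀ (norm_nonneg Cc) hC 2
      calc ‖Cc‖ ^ 2 ≤ (Cgxθ * ‖vi i - vstar i xbar‖) ^ 2 := h1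
        _ = Cgxθ ^ 2 * ‖vi i - vstar i xbar‖ ^ 2 := by ring
    have hsq : ‖a i‖ ^ 2 ≤ 2 * ‖X‖ ^ 2 + 4 * ‖B‖ ^ 2 + 4 * ‖Cc‖ ^ 2 := by
      nlinarith [htri, norm_nonneg (a i), norm_nonneg X, norm_nonneg B, norm_nonneg Cc,
        sq_nonneg (‖X‖ - ‖B‖ - ‖Cc‖), sq_nonneg (‖B‖ - ‖Cc‖)]
    rw [hL]
    clear_value X J1 J2 B Cc
    nlinarith [hX, hB2, hC2, hsq]
  -- rewrite LHS
  clear_value a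
  have hLHS : gradΦ xbar - (m : ℝ)⁻¹ • ∑ i, stilde i = (m : ℝ)⁻¹ • ∑ i, a i := by
    rw [hgradΦ, ← smul_sub]
    congr 1
    rw [ha]
    simp only [Finset.sum_sub_distrib]
  rw [hLHS]
  have hnorm : ‖(m : ℝ)⁻¹ • ∑ i, a i‖ ^ 2 = ((m:ℝ)⁻¹) ^ 2 * ‖∑ i, a i‖ ^ 2 := by
    rw [norm_smul]
    simp [mul_pow, abs_of_pos (inv_pos.mpr hmR)]
  have hsum : ‖∑ i, a i‖ ^ 2 ≤ (m:ℝ) * ∑ i, ‖a i‖ ^ 2 := by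
    calc ‖∑ i, a i‖ ^ 2 ≤ (∑ i, ‖a i‖) ^ 2 := by
          have h1 := norm_sum_le Finset.univ a
          have h2 : (0:ℝ) ≤ ∑ i, ‖a i‖ := Finset.sum_nonneg fun i _ => norm_nonneg _
          nlinarith [h1, norm_nonneg (∑ i, a i)]
      _ ≤ (Finset.univ.card : ℝ) * ∑ i, ‖a i‖ ^ 2 := by
          exact_mod_cast sq_sum_le_card_mul_sum_sq (s := Finset.univ) (f := fun i => ‖a i‖)
      _ = (m:ℝ) * ∑ i, ‖a i‖ ^ 2 := by simp
  have hsum2 : ∑ i, ‖a i‖ ^ 2 ≤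
      L * ∑ i, ‖xi i - xbar‖ ^ 2 + L * ∑ i, ‖θi i - θs i xbar‖ ^ 2
        + 4 * Cgxθ ^ 2 * ∑ i, ‖vi i - vstar i xbar‖ ^ 2 := by
    calc ∑ i, ‖a i‖ ^ 2
        ≤ ∑ i, (L * (‖xi i - xbar‖ ^ 2 + ‖θi i - θs i xbar‖ ^ 2)
            + 4 * Cgxθ ^ 2 * ‖vi i - vstar i xbar‖ ^ 2) :=
          Finset.sum_le_sum fun i _ => hai i
      _ = L * ∑ i, ‖xi i - xbar‖ ^ 2 + L * ∑ i, ‖θi i - θs i xbar‖ ^ 2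
            + 4 * Cgxθ ^ 2 * ∑ i, ‖vi i - vstar i xbar‖ ^ 2 := by
          rw [Finset.mul_sum, Finset.mul_sum, Finset.mul_sum,
            ← Finset.sum_add_distrib, ← Finset.sum_add_distrib]
          exact Finset.sum_congr rfl fun i _ => by ring
  rw [hnorm]
  have hfinal : ((m:ℝ)⁻¹) ^ 2 * ‖∑ i, a i‖ ^ 2 ≤ (m:ℝ)⁻¹ * ∑ i, ‖a i‖ ^ 2 := by
    calc ((m:ℝ)⁻¹) ^ 2 * ‖∑ i, a i‖ ^ 2 ≤ ((m:ℝ)⁻¹) ^ 2 * ((m:ℝ) * ∑ i, ‖a i‖ ^ 2) :=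
          mul_le_mul_of_nonneg_left hsum (by positivity)
      _ = (m:ℝ)⁻¹ * ∑ i, ‖a i‖ ^ 2 := by
          field_simp
  calc ((m:ℝ)⁻¹) ^ 2 * ‖∑ i, a i‖ ^ 2 ≤ (m:ℝ)⁻¹ * ∑ i, ‖a i‖ ^ 2 := hfinal
    _ ≤ (m:ℝ)⁻¹ * (L * ∑ i, ‖xi i - xbar‖ ^ 2 + L * ∑ i, ‖θi i - θs i xbar‖ ^ 2
          + 4 * Cgxθ ^ 2 * ∑ i, ‖vi i - vstar i xbar‖ ^ 2) :=
        mul_le_mul_of_nonneg_left hsum2 (by positivity)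
    _ = (L / m) * ∑ i, ‖xi i - xbar‖ ^ 2 + (L / m) * ∑ i, ‖θi i - θs i xbar‖ ^ 2
          + (4 * Cgxθ ^ 2 / m) * ∑ i, ‖vi i - vstar i xbar‖ ^ 2 := by
        field_simp
        try ring
end
end

section
/- Hypergradient approximation error (stacked form): let x_1,…,x_m ∈ ℝⁿ, θ_1,…,θ_m ∈ ℝᵖ, v_1,…,v_m ∈ ℝᵖ, set x̄ := (1/m)Σ_i x_i and s̃_i := ∇_x f_i(x_i,θ_i) − ∇²_{xθ}g_i(x_i,θ_i) v_i. Then Σ_{i=1}^m ‖∇Φ_i(x̄) − s̃_i‖² ≤ L_{fg,x} Σ_i ‖x_i − x̄‖² + L_{fg,x} Σ_i ‖θ_i − θ_i*(x̄)‖² + 4C²_{g,xθ} Σ_i ‖v_i − v_i*(x̄)‖², where L_{fg,x} := 2L²_{f,x} + 4M²L²_{g,xθ} and M := C_{f,θ}/μ_g. -/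
noncomputable section

open Set Finset
open scoped RealInnerProductSpace

lemma aux_sq3 {a b c : ℝ} : (a + b + c) ^ 2 ≤ 2 * a ^ 2 + 4 * b ^ 2 + 4 * c ^ 2 := by
  nlinarith [sq_nonneg (a - b - c), sq_nonneg (b - c)]

lemma aux_coercive_s11 {E : Type*} [NormedAddCommGroup E] [InnerProductSpace ℝ E] [CompleteSpace E]
    {G : E → ℝ} {grad : E → E} {H : E →L[ℝ] E} {μ : ℝ} {θ0 : E}
    (hSC : StrongConvexOn Set.univ μ G)
    (hgrad : ∀ θ, HasGradientAt G (grad θ) θ)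
    (hH : HasFDerivAt grad H θ0) (u : E) :
    μ * ‖u‖ ^ 2 ≤ ⟪H u, u⟫ := by
  set c : ℝ → E := fun t => θ0 + t • u with hc_def
  have hc : ∀ t : ℝ, HasDerivAt c u t := by
    intro t
    have hc1 := ((hasDerivAt_id t).smul_const u).const_add θ0
    simp only [one_smul] at hc1
    exact hc1
  set F : ℝ → ℝ := fun t => ⟪grad (c t), u⟫ - μ * ‖u‖ ^ 2 * t with hF_def
  set ψ : ℝ → ℝ := fun s => G (c s) - μ * ‖u‖ ^ 2 / 2 * s ^ 2 with hψ_def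
  have hψd : ∀ t : ℝ, HasDerivAt ψ (F t) t := by
    intro t
    have hg := hasGradientAt_iff_hasFDerivAt.mp (hgrad (c t))
    have h1 : HasDerivAt (fun s => G (c s)) (⟪grad (c t), u⟫) t := by
      exact hg.comp_hasDerivAt t (hc t)
    have h2 : HasDerivAt (fun s : ℝ => μ * ‖u‖ ^ 2 / 2 * s ^ 2) (μ * ‖u‖ ^ 2 * t) t := by
      have := (hasDerivAt_pow 2 t).const_mul (μ * ‖u‖ ^ 2 / 2)
      refine this.congr_deriv ?_
      push_cast
      ring
    exact h1.sub h2
  have hψconv : ConvexOn ℝ Set.univ ψ := by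
    refine ⟨convex_univ, fun s _ t _ a b ha hb hab => ?_⟩
    have hkey : c (a • s + b • t) = a • c s + b • c t := by
      have h1 : a • c s + b • c t = (a + b) • θ0 + (a * s + b * t) • u := by
        simp only [hc_def, smul_add, smul_smul, add_smul]
        abel
      rw [h1, hab, one_smul]
      simp [hc_def, smul_eq_mul]
    have hG := hSC.2 (mem_univ (c s)) (mem_univ (c t)) ha hb hab
    rw [← hkey] at hG
    have hsq : ‖c s - c t‖ ^ 2 = (s - t) ^ 2 * ‖u‖ ^ 2 := by
      have h2 : c s - c t = (s - t) • u := by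
        simp only [hc_def, sub_smul]
        abel
      rw [h2, norm_smul, Real.norm_eq_abs, mul_pow, sq_abs]
    obtain rfl : b = 1 - a := by linarith
    simp only [hψ_def, smul_eq_mul] at hG ⊢
    rw [hsq] at hG
    nlinarith [hG]
  have hFmono : Monotone F := by
    have hm := hψconv.monotoneOn_deriv (fun x _ => (hψd x).differentiableAt)
    intro s t hst
    have h1 := hm (mem_univ s) (mem_univ t) hst
    rwa [(hψd s).deriv, (hψd t).deriv] at h1
  have hF0 : HasDerivAt F (⟪H u, u⟫ - μ * ‖u‖ ^ 2) 0 := by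
    have h0 : c 0 = θ0 := by simp [hc_def]
    have hH' : HasFDerivAt grad H (c 0) := h0 ▸ hH
    have h1 : HasDerivAt (fun t => grad (c t)) (H u) 0 := hH'.comp_hasDerivAt 0 (hc 0)
    have h2 : HasDerivAt (fun t => ⟪grad (c t), u⟫) (⟪H u, u⟫) 0 := by
      simpa using h1.inner ℝ (hasDerivAt_const (0 : ℝ) u)
    have h3 : HasDerivAt (fun t : ℝ => μ * ‖u‖ ^ 2 * t) (μ * ‖u‖ ^ 2) 0 := by
      simpa using (hasDerivAt_id (0 : ℝ)).const_mul (μ * ‖u‖ ^ 2)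
    exact h2.sub h3
  have hslope := hasDerivAt_iff_tendsto_slope.mp hF0
  have hkey : (0 : ℝ) ≤ ⟪H u, u⟫ - μ * ‖u‖ ^ 2 := by
    have hle : nhdsWithin (0:ℝ) (Set.Ioi 0) ≤ nhdsWithin (0:ℝ) {(0:ℝ)}ᶜ :=
      nhdsWithin_mono 0 (fun x hx => ne_of_gt hx)
    refine ge_of_tendsto (hslope.mono_left hle) ?_
    · filter_upwards [self_mem_nhdsWithin] with t ht
      have ht' : (0 : ℝ) < t := ht
      have hmono := hFmono ht'.le
      rw [slope_def_field]
      apply div_nonneg _ (by linarith)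
      linarith
  linarith

lemma aux_inv_bound {E : Type*} [NormedAddCommGroup E] [InnerProductSpace ℝ E]
    [CompleteSpace E] {H : E →L[ℝ] E} {μ C : ℝ} (hμ : 0 < μ)
    (hco : ∀ u, μ * ‖u‖ ^ 2 ≤ ⟪H u, u⟫) {w : E} (hw : ‖w‖ ≤ C) :
    ‖H.inverse w‖ ≤ C / μ := by
  have hC : 0 ≤ C := le_trans (norm_nonneg w) hw
  by_cases h : H.IsInvertible
  · obtain ⟨e, he⟩ := h
    rw [← he, ContinuousLinearMap.inverse_equiv]
    simp only [ContinuousLinearEquiv.coe_coe]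
    have hHz : H (e.symm w) = w := by
      rw [← he]
      exact e.apply_symm_apply w
    have h1 : μ * ‖e.symm w‖ ^ 2 ≤ C * ‖e.symm w‖ := by
      have h2 := (hco (e.symm w)).trans (real_inner_le_norm (H (e.symm w)) (e.symm w))
      rw [hHz] at h2
      nlinarith [norm_nonneg (e.symm w)]
    rw [le_div_iff₀ hμ]
    rcases eq_or_lt_of_le (norm_nonneg (e.symm w)) with hz0 | hz0
    · rw [← hz0]
      simpa using hC
    · nlinarith
  · rw [ContinuousLinearMap.inverse_of_not_isInvertible h]
    simp
    positivity

set_option maxHeartbeats 1000000 in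
/-- **Hypergradient approximation error (stacked form).**
With `s̃_i := ∇_x f_i(x_i,θ_i) − ∇²_{xθ}g_i(x_i,θ_i) v_i` and `x̄ := (1/m)Σ_i x_i`,
`Σ_i ‖∇Φ_i(x̄) − s̃_i‖² ≤ L_{fg,x}Σ_i‖x_i − x̄‖² + L_{fg,x}Σ_i‖θ_i − θ_i*(x̄)‖²
  + 4C²_{g,xθ}Σ_i‖v_i − v_i*(x̄)‖²`, where `L_{fg,x} := 2L²_{f,x} + 4M²L²_{g,xθ}`
and `M := C_{f,θ}/μ_g`. -/
theorem stmt_11 {n p m : ℕ}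
    (f g : Fin m → EuclideanSpace ℝ (Fin n) → EuclideanSpace ℝ (Fin p) → ℝ)
    (θs : Fin m → EuclideanSpace ℝ (Fin n) → EuclideanSpace ℝ (Fin p))
    (μg Lfx Lgxθ Cfθ Cgxθ : ℝ) (hμg : 0 < μg)
    (hgC2 : ∀ i, ContDiff ℝ 2 (Function.uncurry (g i)))
    (hgSC : ∀ i x, StrongConvexOn univ μg (g i x))
    (hθs : ∀ i x, IsMinOn (g i x) univ (θs i x))
    (gradθg gradθf : Fin m → EuclideanSpace ℝ (Fin n) →
      EuclideanSpace ℝ (Fin p) → EuclideanSpace ℝ (Fin p))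
    (gradxf : Fin m → EuclideanSpace ℝ (Fin n) → EuclideanSpace ℝ (Fin p) →
      EuclideanSpace ℝ (Fin n))
    (hgradθg : ∀ i x θ, HasGradientAt (g i x) (gradθg i x θ) θ)
    (hgradθf : ∀ i x θ, HasGradientAt (f i x) (gradθf i x θ) θ)
    (hgradxf : ∀ i x θ, HasGradientAt (fun x' => f i x' θ) (gradxf i x θ) x)
    (Hθθg : Fin m → EuclideanSpace ℝ (Fin n) → EuclideanSpace ℝ (Fin p) →
      (EuclideanSpace ℝ (Fin p) →L[ℝ] EuclideanSpace ℝ (Fin p)))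
    (hHθθg : ∀ i x θ, HasFDerivAt (gradθg i x) (Hθθg i x θ) θ)
    (Jxθg : Fin m → EuclideanSpace ℝ (Fin n) → EuclideanSpace ℝ (Fin p) →
      (EuclideanSpace ℝ (Fin n) →L[ℝ] EuclideanSpace ℝ (Fin p)))
    (hJxθg : ∀ i x θ, HasFDerivAt (fun x' => gradθg i x' θ) (Jxθg i x θ) x)
    (hLfx : ∀ i x x' θ θ', ‖gradxf i x θ - gradxf i x' θ'‖ ^ 2 ≤
      Lfx ^ 2 * (‖x - x'‖ ^ 2 + ‖θ - θ'‖ ^ 2))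
    (hLgxθ : ∀ i x x' θ θ', ‖Jxθg i x θ - Jxθg i x' θ'‖ ^ 2 ≤
      Lgxθ ^ 2 * (‖x - x'‖ ^ 2 + ‖θ - θ'‖ ^ 2))
    (hCgxθ : ∀ i x θ, ‖Jxθg i x θ‖ ≤ Cgxθ)
    (hCfθ : ∀ i x, ‖gradθf i x (θs i x)‖ ≤ Cfθ)
    -- hypergradients and their surrogates
    (vstar : Fin m → EuclideanSpace ℝ (Fin n) → EuclideanSpace ℝ (Fin p))
    (hvstar : ∀ i x, vstar i x =
      (Hθθg i x (θs i x)).inverse (gradθf i x (θs i x)))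
    (gradΦi : Fin m → EuclideanSpace ℝ (Fin n) → EuclideanSpace ℝ (Fin n))
    (hgradΦi : ∀ i x, gradΦi i x =
      gradxf i x (θs i x) -
        (ContinuousLinearMap.adjoint (Jxθg i x (θs i x))) (vstar i x))
    -- the points
    (xi : Fin m → EuclideanSpace ℝ (Fin n))
    (θi vi : Fin m → EuclideanSpace ℝ (Fin p))
    (xbar : EuclideanSpace ℝ (Fin n)) (hxbar : xbar = (m : ℝ)⁻¹ • ∑ i, xi i)
    (stilde : Fin m → EuclideanSpace ℝ (Fin n))
    (hstilde : ∀ i, stilde i = gradxf i (xi i) (θi i) -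
      (ContinuousLinearMap.adjoint (Jxθg i (xi i) (θi i))) (vi i)) :
    ∑ i, ‖gradΦi i xbar - stilde i‖ ^ 2 ≤
      (2 * Lfx ^ 2 + 4 * (Cfθ / μg) ^ 2 * Lgxθ ^ 2) *
        ∑ i, ‖xi i - xbar‖ ^ 2
      + (2 * Lfx ^ 2 + 4 * (Cfθ / μg) ^ 2 * Lgxθ ^ 2) *
        ∑ i, ‖θi i - θs i xbar‖ ^ 2
      + 4 * Cgxθ ^ 2 * ∑ i, ‖vi i - vstar i xbar‖ ^ 2 := by
  have hM : ∀ i : Fin m, ‖vstar i xbar‖ ≤ Cfθ / μg := by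
    intro i
    rw [hvstar]
    exact aux_inv_bound hμg
      (fun u => aux_coercive_s11 (hgSC i xbar) (hgradθg i xbar) (hHθθg i xbar (θs i xbar)) u)
      (hCfθ i xbar)
  have key : ∀ i : Fin m, ‖gradΦi i xbar - stilde i‖ ^ 2 ≤
      (2 * Lfx ^ 2 + 4 * (Cfθ / μg) ^ 2 * Lgxθ ^ 2) * ‖xi i - xbar‖ ^ 2
      + (2 * Lfx ^ 2 + 4 * (Cfθ / μg) ^ 2 * Lgxθ ^ 2) * ‖θi i - θs i xbar‖ ^ 2
      + 4 * Cgxθ ^ 2 * ‖vi i - vstar i xbar‖ ^ 2 := by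
    intro i
    set A := gradxf i xbar (θs i xbar) - gradxf i (xi i) (θi i) with hAdef
    set B := (ContinuousLinearMap.adjoint
        (Jxθg i xbar (θs i xbar) - Jxθg i (xi i) (θi i))) (vstar i xbar) with hBdef
    set Cv := (ContinuousLinearMap.adjoint (Jxθg i (xi i) (θi i)))
        (vstar i xbar - vi i) with hCvdef
    have hdec : gradΦi i xbar - stilde i = A - B - Cv := by
      rw [hgradΦi, hstilde, hAdef, hBdef, hCvdef]
      simp only [map_sub, ContinuousLinearMap.sub_apply]
      abel
    have hAle : ‖A‖ ^ 2 ≤ Lfx ^ 2 * (‖xi i - xbar‖ ^ 2 + ‖θi i - θs i xbar‖ ^ 2) := by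
      have h := hLfx i xbar (xi i) (θs i xbar) (θi i)
      rwa [norm_sub_rev xbar (xi i), norm_sub_rev (θs i xbar) (θi i)] at h
    have hJle : ‖Jxθg i xbar (θs i xbar) - Jxθg i (xi i) (θi i)‖ ^ 2 ≤
        Lgxθ ^ 2 * (‖xi i - xbar‖ ^ 2 + ‖θi i - θs i xbar‖ ^ 2) := by
      have h := hLgxθ i xbar (xi i) (θs i xbar) (θi i)
      rwa [norm_sub_rev xbar (xi i), norm_sub_rev (θs i xbar) (θi i)] at h
    have hBle : ‖B‖ ≤ ‖Jxθg i xbar (θs i xbar) - Jxθg i (xi i) (θi i)‖ * (Cfθ / μg) := by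
      calc ‖B‖ ≤ ‖ContinuousLinearMap.adjoint
            (Jxθg i xbar (θs i xbar) - Jxθg i (xi i) (θi i))‖ * ‖vstar i xbar‖ :=
          ContinuousLinearMap.le_opNorm _ _
        _ = ‖Jxθg i xbar (θs i xbar) - Jxθg i (xi i) (θi i)‖ * ‖vstar i xbar‖ := by
          rw [ContinuousLinearMap.adjoint.norm_map]
        _ ≤ ‖Jxθg i xbar (θs i xbar) - Jxθg i (xi i) (θi i)‖ * (Cfθ / μg) :=
          mul_le_mul_of_nonneg_left (hM i) (norm_nonneg _)
    have hB2 : ‖B‖ ^ 2 ≤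
        Lgxθ ^ 2 * (‖xi i - xbar‖ ^ 2 + ‖θi i - θs i xbar‖ ^ 2) * (Cfθ / μg) ^ 2 := by
      have h1 : ‖B‖ ^ 2 ≤ (‖Jxθg i xbar (θs i xbar) - Jxθg i (xi i) (θi i)‖ * (Cfθ / μg)) ^ 2 :=
        pow_le_pow_left₀ (norm_nonneg B) hBle 2
      rw [mul_pow] at h1
      refine h1.trans (mul_le_mul_of_nonneg_right hJle (sq_nonneg _))
    have hCle : ‖Cv‖ ≤ Cgxθ * ‖vi i - vstar i xbar‖ := by
      calc ‖Cv‖ ≤ ‖ContinuousLinearMap.adjoint (Jxθg i (xi i) (θi i))‖ *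
            ‖vstar i xbar - vi i‖ := ContinuousLinearMap.le_opNorm _ _
        _ = ‖Jxθg i (xi i) (θi i)‖ * ‖vstar i xbar - vi i‖ := by
          rw [ContinuousLinearMap.adjoint.norm_map]
        _ ≤ Cgxθ * ‖vi i - vstar i xbar‖ := by
          rw [norm_sub_rev]
          exact mul_le_mul_of_nonneg_right (hCgxθ i (xi i) (θi i)) (norm_nonneg _)
    have hC2 : ‖Cv‖ ^ 2 ≤ Cgxθ ^ 2 * ‖vi i - vstar i xbar‖ ^ 2 := by
      have h1 := pow_le_pow_left₀ (norm_nonneg Cv) hCle 2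
      rwa [mul_pow] at h1
    have htri : ‖gradΦi i xbar - stilde i‖ ≤ ‖A‖ + ‖B‖ + ‖Cv‖ := by
      rw [hdec]
      calc ‖A - B - Cv‖ ≤ ‖A - B‖ + ‖Cv‖ := norm_sub_le _ _
        _ ≤ ‖A‖ + ‖B‖ + ‖Cv‖ := add_le_add_left (norm_sub_le _ _) _
    have h2 : ‖gradΦi i xbar - stilde i‖ ^ 2 ≤ (‖A‖ + ‖B‖ + ‖Cv‖) ^ 2 :=
      pow_le_pow_left₀ (norm_nonneg _) htri 2
    have h3 : (‖A‖ + ‖B‖ + ‖Cv‖) ^ 2 ≤ 2 * ‖A‖ ^ 2 + 4 * ‖B‖ ^ 2 + 4 * ‖Cv‖ ^ 2 := aux_sq3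
    nlinarith [hAle, hB2, hC2, h2, h3]
  calc ∑ i, ‖gradΦi i xbar - stilde i‖ ^ 2 ≤
      ∑ i, ((2 * Lfx ^ 2 + 4 * (Cfθ / μg) ^ 2 * Lgxθ ^ 2) * ‖xi i - xbar‖ ^ 2
        + (2 * Lfx ^ 2 + 4 * (Cfθ / μg) ^ 2 * Lgxθ ^ 2) * ‖θi i - θs i xbar‖ ^ 2
        + 4 * Cgxθ ^ 2 * ‖vi i - vstar i xbar‖ ^ 2) :=
      Finset.sum_le_sum (fun i _ => key i)
    _ = (2 * Lfx ^ 2 + 4 * (Cfθ / μg) ^ 2 * Lgxθ ^ 2) * ∑ i, ‖xi i - xbar‖ ^ 2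
      + (2 * Lfx ^ 2 + 4 * (Cfθ / μg) ^ 2 * Lgxθ ^ 2) * ∑ i, ‖θi i - θs i xbar‖ ^ 2
      + 4 * Cgxθ ^ 2 * ∑ i, ‖vi i - vstar i xbar‖ ^ 2 := by
      rw [Finset.sum_add_distrib, Finset.sum_add_distrib, Finset.mul_sum, Finset.mul_sum,
        Finset.mul_sum]
end
end

section
/- One-step contraction of the Hessian-inverse-vector product iteration: let x_1,…,x_m ∈ ℝⁿ, θ_1,…,θ_m ∈ ℝᵖ, v_1,…,v_m ∈ ℝᵖ, x̄ ∈ ℝⁿ, and let 0 < λ ≤ 2/(μ_g + L_{g,θ}). Then Σ_{i=1}^m ‖(I − λ∇²_{θθ}g_i(x_i,θ_i)) v_i + λ∇_θ f_i(x_i,θ_i) − v_i*(x̄)‖² ≤ (1 − μ_gλ/3)(1 − μ_gλ) Σ_i ‖v_i − v_i*(x̄)‖² + (2λ/μ_g) L_{fg,θ} Σ_i (‖x_i − x̄‖² + ‖θ_i − θ_i*(x̄)‖²), where L_{fg,θ} := 2L²_{f,θ} + 4M²L²_{g,θθ} and M := C_{f,θ}/μ_g. -/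
open Set Finset

section helpers

open RealInnerProductSpace

variable {E : Type*} [NormedAddCommGroup E] [InnerProductSpace ℝ E] [CompleteSpace E]

/-- Strong convexity implies strong monotonicity of the gradient. -/
lemma sc_grad_mono {μ : ℝ} {f : E → ℝ} {G : E → E}
    (hsc : StrongConvexOn univ μ f) (hG : ∀ x, HasGradientAt f (G x) x) (a b : E) :
    μ * ‖b - a‖ ^ 2 ≤ ⟪G b - G a, b - a⟫ := by
  set l : ℝ → E := fun t => a + t • (b - a) with hl
  set ψ : ℝ → ℝ := fun t => f (l t) - μ / 2 * (t ^ 2 * ‖b - a‖ ^ 2) with hψ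
  have hline : ∀ t : ℝ, HasDerivAt l (b - a) t := by
    intro t
    simpa [hl] using ((hasDerivAt_id t).smul_const (b - a)).const_add a
  have hder : ∀ t : ℝ, HasDerivAt ψ (⟪G (l t), b - a⟫ - μ / 2 * (2 * t * ‖b - a‖ ^ 2)) t := by
    intro t
    have h1 : HasFDerivAt f (InnerProductSpace.toDual ℝ E (G (l t))) (l t) :=
      hasGradientAt_iff_hasFDerivAt.mp (hG (l t))
    have h2 : HasDerivAt (fun t => f (l t)) (⟪G (l t), b - a⟫) t := by
      have := h1.comp_hasDerivAt t (hline t)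
      simp only [InnerProductSpace.toDual_apply_apply] at this
      exact this
    have h3 : HasDerivAt (fun t : ℝ => μ / 2 * (t ^ 2 * ‖b - a‖ ^ 2))
        (μ / 2 * (2 * t * ‖b - a‖ ^ 2)) t := by
      have := ((hasDerivAt_pow 2 t).mul_const (‖b - a‖ ^ 2)).const_mul (μ / 2)
      simpa [mul_comm, mul_assoc] using this
    exact h2.sub h3
  have hconv : ConvexOn ℝ univ ψ := by
    refine ⟨convex_univ, fun s _ t _ c d hc hd hcd => ?_⟩
    have key := hsc.2 (mem_univ (l s)) (mem_univ (l t)) hc hd hcd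
    have hcomb : c • l s + d • l t = l (c * s + d * t) := by
      have hc1 : c = 1 - d := by linarith
      rw [hc1]; simp only [hl]; module
    have hdiff : l s - l t = (s - t) • (b - a) := by simp only [hl]; module
    have hnorm : ‖l s - l t‖ ^ 2 = (s - t) ^ 2 * ‖b - a‖ ^ 2 := by
      rw [hdiff, norm_smul, Real.norm_eq_abs, mul_pow, sq_abs]
    rw [hcomb] at key
    simp only [hψ, smul_eq_mul] at *
    rw [hnorm] at key
    have hc1 : d = 1 - c := by linarith
    rw [hc1] at key ⊢
    nlinarith [key, sq_nonneg (s - t), sq_nonneg ‖b - a‖]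
  have hmono := hconv.monotoneOn_deriv (fun x _ => (hder x).differentiableAt)
  have h01 := hmono (mem_univ (0 : ℝ)) (mem_univ (1 : ℝ)) zero_le_one
  rw [(hder 0).deriv, (hder 1).deriv] at h01
  have hl0 : l 0 = a := by simp [hl]
  have hl1 : l 1 = b := by simp [hl]
  rw [hl0, hl1] at h01
  have : ⟪G b - G a, b - a⟫ = ⟪G b, b - a⟫ - ⟪G a, b - a⟫ := by
    rw [inner_sub_left]
  rw [this]
  nlinarith [h01]



open RealInnerProductSpace

variable {E : Type*} [NormedAddCommGroup E] [InnerProductSpace ℝ E] [CompleteSpace E]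

/-- Lower bound for the Hessian quadratic form from strong convexity. -/
lemma hess_lower {μ : ℝ} {f : E → ℝ} {G : E → E} {H : E →L[ℝ] E} {θ : E}
    (hsc : StrongConvexOn univ μ f) (hG : ∀ x, HasGradientAt f (G x) x)
    (hH : HasFDerivAt G H θ) (u : E) :
    μ * ‖u‖ ^ 2 ≤ ⟪H u, u⟫ := by
  have hmono := sc_grad_mono hsc hG
  set φ : ℝ → ℝ := fun t => ⟪G (θ + t • u) - G θ, u⟫ with hφ
  have hline : ∀ t : ℝ, HasDerivAt (fun t : ℝ => θ + t • u) u t := by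
    intro t
    simpa using ((hasDerivAt_id t).smul_const u).const_add θ
  have hGl : HasDerivAt (fun t : ℝ => G (θ + t • u) - G θ) (H u) 0 := by
    have hH0 : HasFDerivAt G H (θ + (0:ℝ) • u) := by simpa using hH
    exact (hH0.comp_hasDerivAt 0 (hline 0)).sub_const (G θ)
  have hφd : HasDerivAt φ (⟪H u, u⟫) 0 := by
    have := hGl.inner ℝ (hasDerivAt_const (0 : ℝ) u)
    simpa using this
  have hslope := hasDerivAt_iff_tendsto_slope.mp hφd
  have hslope' : Filter.Tendsto (slope φ 0) (nhdsWithin 0 (Ioi 0)) (nhds ⟪H u, u⟫) :=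
    hslope.mono_left (nhdsWithin_mono 0 (fun x hx => ne_of_gt hx))
  refine ge_of_tendsto hslope' ?_
  filter_upwards [self_mem_nhdsWithin] with t (ht : 0 < t)
  have key := hmono θ (θ + t • u)
  have h1 : θ + t • u - θ = t • u := by module
  rw [h1] at key
  have h2 : ‖t • u‖ ^ 2 = t ^ 2 * ‖u‖ ^ 2 := by
    rw [norm_smul, Real.norm_eq_abs, mul_pow, sq_abs]
  rw [h2, real_inner_smul_right] at key
  have hφt : μ * t * ‖u‖ ^ 2 ≤ φ t := by
    have := (mul_le_mul_iff_right₀ ht).mpr (le_refl (1:ℝ))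
    nlinarith [key]
  rw [slope_def_field]
  have hφ0 : φ 0 = 0 := by simp [hφ]
  rw [hφ0, sub_zero, sub_zero, le_div_iff₀ ht]
  nlinarith [hφt]

/-- Symmetry of the Hessian. -/
lemma hess_symm {f : E → ℝ} {G : E → E} {H : E →L[ℝ] E} {θ : E}
    (hG : ∀ x, HasGradientAt f (G x) x) (hH : HasFDerivAt G H θ) (u w : E) :
    ⟪H u, w⟫ = ⟪H w, u⟫ := by
  set L : E →L[ℝ] (StrongDual ℝ E) :=
    (InnerProductSpace.toDual ℝ E).toLinearIsometry.toContinuousLinearMap with hLdef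
  have hf' : ∀ y, HasFDerivAt f (L (G y)) y := fun y =>
    hasGradientAt_iff_hasFDerivAt.mp (hG y)
  have hf'' : HasFDerivAt (fun y => L (G y)) (L.comp H) θ := L.hasFDerivAt.comp θ hH
  have := second_derivative_symmetric hf' hf'' u w
  simp [hLdef, InnerProductSpace.toDual_apply_apply] at this
  exact this


/-- Norm bound for a self-adjoint operator from quadratic form bounds. -/
lemma selfadj_norm_le (S : E →L[ℝ] E) (r : ℝ)
    (hsym : ∀ x y : E, ⟪S x, y⟫ = ⟪S y, x⟫)
    (hq : ∀ x : E, |⟪S x, x⟫| ≤ r * ‖x‖ ^ 2) (u : E) :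
    ‖S u‖ ≤ r * ‖u‖ := by
  rcases eq_or_ne u 0 with hu | hu
  · simp [hu]
  have hu0 : 0 < ‖u‖ := norm_pos_iff.mpr hu
  have hr : 0 ≤ r := by
    have h := hq u
    have h0 : (0:ℝ) ≤ |⟪S u, u⟫| := abs_nonneg _
    nlinarith [pow_pos hu0 2]
  rcases eq_or_ne (S u) 0 with hSu | hSu
  · rw [hSu, norm_zero]; positivity
  have hSu0 : 0 < ‖S u‖ := norm_pos_iff.mpr hSu
  set w : E := (‖u‖ / ‖S u‖) • S u with hw
  have hwnorm : ‖w‖ = ‖u‖ := by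
    rw [hw, norm_smul, Real.norm_eq_abs, abs_of_nonneg (by positivity)]
    field_simp
  have hinner : ⟪S u, w⟫ = ‖u‖ * ‖S u‖ := by
    rw [hw, real_inner_smul_right, real_inner_self_eq_norm_sq]
    field_simp
  have hkey : 4 * ⟪S u, w⟫ = ⟪S (u + w), u + w⟫ - ⟪S (u - w), u - w⟫ := by
    have e1 : ⟪S (u + w), u + w⟫
        = ⟪S u, u⟫ + ⟪S u, w⟫ + ⟪S w, u⟫ + ⟪S w, w⟫ := by
      rw [map_add]; simp [inner_add_left, inner_add_right]; ring
    have e2 : ⟪S (u - w), u - w⟫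
        = ⟪S u, u⟫ - ⟪S u, w⟫ - ⟪S w, u⟫ + ⟪S w, w⟫ := by
      rw [map_sub]; simp [inner_sub_left, inner_sub_right]; ring
    rw [e1, e2, hsym u w]; ring
  have hp := parallelogram_law_with_norm ℝ u w
  have hb1 := (abs_le.mp (hq (u + w))).2
  have hb2 := (abs_le.mp (hq (u - w))).1
  have h4 : 4 * (‖u‖ * ‖S u‖) ≤ r * ‖u + w‖ ^ 2 + r * ‖u - w‖ ^ 2 := by
    rw [← hinner]; rw [hkey]; linarith
  have hsq : ‖u + w‖ ^ 2 + ‖u - w‖ ^ 2 = 2 * (‖u‖ ^ 2 + ‖w‖ ^ 2) := by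
    have := hp; nlinarith [hp]
  rw [hwnorm] at hsq
  have : 4 * (‖u‖ * ‖S u‖) ≤ 4 * (r * ‖u‖ ^ 2) := by nlinarith
  have h5 : ‖u‖ * ‖S u‖ ≤ ‖u‖ * (r * ‖u‖) := by nlinarith
  exact le_of_mul_le_mul_left (by linarith [h5]) hu0

/-- One-step contraction for `u ↦ u - λ H u`. -/
lemma contraction_step (H : E →L[ℝ] E) (μ L lam : ℝ) (hμ : 0 < μ) (hμL : μ ≤ L)
    (hsym : ∀ x y : E, ⟪H x, y⟫ = ⟪H y, x⟫)
    (hlo : ∀ x : E, μ * ‖x‖ ^ 2 ≤ ⟪H x, x⟫)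
    (hhi : ∀ x : E, ‖H x‖ ≤ L * ‖x‖)
    (hlam0 : 0 < lam) (hlam : lam * (μ + L) ≤ 2) (u : E) :
    ‖u - lam • H u‖ ≤ (1 - lam * μ) * ‖u‖ := by
  set c : ℝ := (μ + L) / 2 with hc
  set r : ℝ := (L - μ) / 2 with hr
  set S : E →L[ℝ] E := H - c • ContinuousLinearMap.id ℝ E with hS
  have hSapp : ∀ x : E, S x = H x - c • x := by
    intro x; simp [hS, ContinuousLinearMap.sub_apply]
  have hsymS : ∀ x y : E, ⟪S x, y⟫ = ⟪S y, x⟫ := by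
    intro x y
    rw [hSapp, hSapp, inner_sub_left, inner_sub_left, hsym x y,
      real_inner_smul_left, real_inner_smul_left, real_inner_comm x y]
  have hqS : ∀ x : E, |⟪S x, x⟫| ≤ r * ‖x‖ ^ 2 := by
    intro x
    rw [hSapp, inner_sub_left, real_inner_smul_left, real_inner_self_eq_norm_sq]
    have h1 := hlo x
    have h2 : ⟪H x, x⟫ ≤ L * ‖x‖ ^ 2 := by
      have := real_inner_le_norm (H x) x
      nlinarith [hhi x, norm_nonneg x, norm_nonneg (H x)]
    rw [abs_le]; constructor <;> nlinarith
  have hSnorm : ‖H u - c • u‖ ≤ r * ‖u‖ := by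
    have := selfadj_norm_le S r hsymS hqS u
    rwa [hSapp] at this
  have hid : u - lam • H u = (1 - lam * c) • u - lam • (H u - c • u) := by module
  rw [hid]
  have h1 : ‖(1 - lam * c) • u - lam • (H u - c • u)‖
      ≤ |1 - lam * c| * ‖u‖ + lam * ‖H u - c • u‖ := by
    refine (norm_sub_le _ _).trans ?_
    rw [norm_smul, norm_smul, Real.norm_eq_abs, Real.norm_eq_abs,
      abs_of_pos hlam0]
  have habs : |1 - lam * c| ≤ 1 - lam * μ - lam * r := by
    rw [abs_le]; constructor
    · rw [hc, hr]; nlinarith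
    · rw [hc, hr]; nlinarith
  have hrn : 0 ≤ lam * (r * ‖u‖ - ‖H u - c • u‖) := by
    have := hSnorm; nlinarith
  nlinarith [norm_nonneg u, h1, habs, hSnorm, mul_le_mul_of_nonneg_right habs (norm_nonneg u)]


/-- A coercive operator on a finite-dimensional space is invertible. -/
lemma coercive_inverse_apply [FiniteDimensional ℝ E] (H : E →L[ℝ] E) {μ : ℝ} (hμ : 0 < μ)
    (hlo : ∀ x : E, μ * ‖x‖ ^ 2 ≤ ⟪H x, x⟫) (b : E) :
    H (H.inverse b) = b := by
  have hinj : Function.Injective H := by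
    intro x y hxy
    have h : H (x - y) = 0 := by rw [map_sub, hxy, sub_self]
    have h2 := hlo (x - y)
    rw [h, inner_zero_left] at h2
    have h3 : ‖x - y‖ ^ 2 ≤ 0 := by nlinarith
    have h4 : ‖x - y‖ = 0 := by nlinarith [sq_nonneg ‖x - y‖, norm_nonneg (x - y)]
    rwa [norm_eq_zero, sub_eq_zero] at h4
  have hinjl : Function.Injective (H : E →ₗ[ℝ] E) := hinj
  have hbij : Function.Bijective (H : E →ₗ[ℝ] E) :=
    ⟨hinjl, LinearMap.injective_iff_surjective.mp hinjl⟩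
  set le : E ≃ₗ[ℝ] E := LinearEquiv.ofBijective (H : E →ₗ[ℝ] E) hbij with hle
  set e : E ≃L[ℝ] E := le.toContinuousLinearEquiv with he
  have hcoe : (e : E →L[ℝ] E) = H := by
    ext x; rfl
  rw [← hcoe, ContinuousLinearMap.inverse_equiv]
  exact e.apply_symm_apply b


end helpers

noncomputable section



/-- Scalar combination lemma. -/
lemma numeric_combine (t lam μg Lfθ Lgθθ Cfθ A En U nb nw Δ : ℝ)
    (ht0 : 0 < t) (ht1 : t ≤ 1) (hlam0 : 0 < lam) (hμg : 0 < μg) (htdef : t = μg * lam)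
    (hΔ0 : 0 ≤ Δ) (hA0 : 0 ≤ A) (hEn0 : 0 ≤ En) (hU0 : 0 ≤ U)
    (hnb0 : 0 ≤ nb) (hnw0 : 0 ≤ nw)
    (hcon : A ≤ (1 - t) * U)
    (hE : En ≤ lam * nb + lam * nw)
    (hnb2 : nb ^ 2 ≤ Lfθ ^ 2 * Δ)
    (hnw2 : nw ^ 2 ≤ (Cfθ / μg) ^ 2 * (Lgθθ ^ 2 * Δ)) :
    (A + En) ^ 2 ≤ (1 - t / 3) * (1 - t) * U ^ 2
      + (2 * lam / μg) * (2 * Lfθ ^ 2 + 4 * (Cfθ / μg) ^ 2 * Lgθθ ^ 2) * Δ := by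
  have hEn2 : En ^ 2 ≤ 2 * lam ^ 2 * (nb ^ 2 + nw ^ 2) := by
    have h1 : En ^ 2 ≤ (lam * nb + lam * nw) ^ 2 := pow_le_pow_left₀ hEn0 hE 2
    linarith [h1, sq_nonneg (lam * nb - lam * nw)]
  have hE3 : En ^ 2 ≤ 2 * lam ^ 2 * (Lfθ ^ 2 * Δ + (Cfθ / μg) ^ 2 * (Lgθθ ^ 2 * Δ)) := by
    have h2 := mul_le_mul_of_nonneg_left (add_le_add hnb2 hnw2)
      (by positivity : (0:ℝ) ≤ 2 * lam ^ 2)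
    linarith
  have hE4 : 2 * En ^ 2 ≤ t * ((2 * lam / μg) * (2 * Lfθ ^ 2
      + 4 * (Cfθ / μg) ^ 2 * Lgθθ ^ 2) * Δ) := by
    have hfact : t * ((2 * lam / μg) * (2 * Lfθ ^ 2 + 4 * (Cfθ / μg) ^ 2 * Lgθθ ^ 2) * Δ)
        = 4 * lam ^ 2 * (Lfθ ^ 2 + 2 * (Cfθ / μg) ^ 2 * Lgθθ ^ 2) * Δ := by
      rw [htdef]; field_simp; ring
    rw [hfact]
    linarith [hE3, mul_nonneg (mul_nonneg (sq_nonneg lam)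
      (mul_nonneg (sq_nonneg (Cfθ / μg)) (sq_nonneg Lgθθ))) hΔ0]
  have S1 : t * (2 - t) * (A + En) ^ 2 ≤ 2 * t * A ^ 2 + 2 * (2 - t) * En ^ 2 := by
    linarith [sq_nonneg (t * A - (2 - t) * En)]
  have S2 : A ^ 2 ≤ (1 - t) ^ 2 * U ^ 2 := by
    have h := pow_le_pow_left₀ hA0 hcon 2
    rwa [mul_pow] at h
  have S3 : 2 * t * ((1 - t) ^ 2 * U ^ 2) ≤ t * (2 - t) * ((1 - t / 3) * (1 - t) * U ^ 2) := by
    have key : 0 ≤ t ^ 2 * U ^ 2 * ((1 - t) * (1 + t)) :=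
      mul_nonneg (mul_nonneg (sq_nonneg t) (sq_nonneg U))
        (mul_nonneg (by linarith) (by linarith))
    linarith [key]
  have S4 : 2 * (2 - t) * En ^ 2 ≤ (2 - t) * (t * ((2 * lam / μg) * (2 * Lfθ ^ 2
      + 4 * (Cfθ / μg) ^ 2 * Lgθθ ^ 2) * Δ)) := by
    have h2t : (0:ℝ) ≤ 2 - t := by linarith
    linarith [mul_le_mul_of_nonneg_left hE4 h2t]
  have hpos : 0 < t * (2 - t) := mul_pos ht0 (by linarith)
  have hS2' := mul_le_mul_of_nonneg_left S2 (by linarith : (0:ℝ) ≤ 2 * t)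
  have hfin : t * (2 - t) * (A + En) ^ 2 ≤ t * (2 - t) * ((1 - t / 3) * (1 - t) * U ^ 2
      + (2 * lam / μg) * (2 * Lfθ ^ 2 + 4 * (Cfθ / μg) ^ 2 * Lgθθ ^ 2) * Δ) := by
    linarith [S1, S3, S4, hS2']
  exact (mul_le_mul_iff_right₀ hpos).mp hfin

set_option maxHeartbeats 1000000 in
/-- **One-step contraction of the Hessian-inverse-vector product iteration.**
For `0 < λ ≤ 2/(μ_g + L_{g,θ})`,
`Σ_i ‖(I − λ∇²_{θθ}g_i(x_i,θ_i))v_i + λ∇_θ f_i(x_i,θ_i) − v_i*(x̄)‖²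
  ≤ (1 − μ_gλ/3)(1 − μ_gλ) Σ_i ‖v_i − v_i*(x̄)‖²
  + (2λ/μ_g) L_{fg,θ} Σ_i (‖x_i − x̄‖² + ‖θ_i − θ_i*(x̄)‖²)`,
where `L_{fg,θ} := 2L²_{f,θ} + 4M²L²_{g,θθ}` and `M := C_{f,θ}/μ_g`. -/
theorem stmt_12 {n p m : ℕ}
    (f g : Fin m → EuclideanSpace ℝ (Fin n) → EuclideanSpace ℝ (Fin p) → ℝ)
    (θs : Fin m → EuclideanSpace ℝ (Fin n) → EuclideanSpace ℝ (Fin p))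
    (μg Lgθ Lfθ Lgθθ Cfθ : ℝ) (hμg : 0 < μg)
    (hgC2 : ∀ i, ContDiff ℝ 2 (Function.uncurry (g i)))
    (hgSC : ∀ i x, StrongConvexOn univ μg (g i x))
    (hθs : ∀ i x, IsMinOn (g i x) univ (θs i x))
    (gradθg gradθf : Fin m → EuclideanSpace ℝ (Fin n) →
      EuclideanSpace ℝ (Fin p) → EuclideanSpace ℝ (Fin p))
    (hgradθg : ∀ i x θ, HasGradientAt (g i x) (gradθg i x θ) θ)
    (hgradθf : ∀ i x θ, HasGradientAt (f i x) (gradθf i x θ) θ)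
    (hLgθ : ∀ i x θ θ', ‖gradθg i x θ - gradθg i x θ'‖ ≤ Lgθ * ‖θ - θ'‖)
    (Hθθg : Fin m → EuclideanSpace ℝ (Fin n) → EuclideanSpace ℝ (Fin p) →
      (EuclideanSpace ℝ (Fin p) →L[ℝ] EuclideanSpace ℝ (Fin p)))
    (hHθθg : ∀ i x θ, HasFDerivAt (gradθg i x) (Hθθg i x θ) θ)
    (hLfθ : ∀ i x x' θ θ', ‖gradθf i x θ - gradθf i x' θ'‖ ^ 2 ≤
      Lfθ ^ 2 * (‖x - x'‖ ^ 2 + ‖θ - θ'‖ ^ 2))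
    (hLgθθ : ∀ i x x' θ θ', ‖Hθθg i x θ - Hθθg i x' θ'‖ ^ 2 ≤
      Lgθθ ^ 2 * (‖x - x'‖ ^ 2 + ‖θ - θ'‖ ^ 2))
    (hCfθ : ∀ i x, ‖gradθf i x (θs i x)‖ ≤ Cfθ)
    (vstar : Fin m → EuclideanSpace ℝ (Fin n) → EuclideanSpace ℝ (Fin p))
    (hvstar : ∀ i x, vstar i x =
      (Hθθg i x (θs i x)).inverse (gradθf i x (θs i x)))
    (lam : ℝ) (hlam0 : 0 < lam) (hlam : lam ≤ 2 / (μg + Lgθ))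
    (xi : Fin m → EuclideanSpace ℝ (Fin n))
    (θi vi : Fin m → EuclideanSpace ℝ (Fin p))
    (xbar : EuclideanSpace ℝ (Fin n)) :
    ∑ i, ‖vi i - lam • (Hθθg i (xi i) (θi i)) (vi i)
        + lam • gradθf i (xi i) (θi i) - vstar i xbar‖ ^ 2 ≤
      (1 - μg * lam / 3) * (1 - μg * lam) * ∑ i, ‖vi i - vstar i xbar‖ ^ 2
      + (2 * lam / μg) * (2 * Lfθ ^ 2 + 4 * (Cfθ / μg) ^ 2 * Lgθθ ^ 2) *
        ∑ i, (‖xi i - xbar‖ ^ 2 + ‖θi i - θs i xbar‖ ^ 2) := by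
  classical
  rcases Nat.eq_zero_or_pos m with hm | hm
  · subst hm; simp
  rcases Nat.eq_zero_or_pos p with hp | hp
  · subst hp
    have hzero : ∀ v : EuclideanSpace ℝ (Fin 0), v = 0 := fun v => Subsingleton.elim v 0
    have hns : ∀ v : EuclideanSpace ℝ (Fin 0), ‖v‖ ^ 2 = 0 := fun v => by
      rw [hzero v, norm_zero]; ring
    have h1 : ∑ i, ‖vi i - lam • (Hθθg i (xi i) (θi i)) (vi i)
        + lam • gradθf i (xi i) (θi i) - vstar i xbar‖ ^ 2 = 0 :=
      Finset.sum_eq_zero fun i _ => hns _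
    have h2 : ∑ i, ‖vi i - vstar i xbar‖ ^ 2 = 0 :=
      Finset.sum_eq_zero fun i _ => hns _
    rw [h1, h2, mul_zero, zero_add]
    have hc : (0:ℝ) ≤ 2 * lam / μg := div_nonneg (by linarith) hμg.le
    exact mul_nonneg (mul_nonneg hc (by positivity))
      (Finset.sum_nonneg fun i _ => by positivity)
  -- main case
  set i0 : Fin m := ⟨0, hm⟩ with hi0
  set u₀ : EuclideanSpace ℝ (Fin p) := EuclideanSpace.single (⟨0, hp⟩ : Fin p) (1:ℝ) with hu₀def
  have hu₀ : ‖u₀‖ = 1 := by simp [hu₀def, EuclideanSpace.norm_single]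
  have hLgθ0 : 0 ≤ Lgθ := by
    have h := (norm_nonneg (gradθg i0 xbar u₀ - gradθg i0 xbar 0)).trans (hLgθ i0 xbar u₀ 0)
    rw [sub_zero, hu₀, mul_one] at h
    exact h
  have hlip : ∀ i x θ (u : EuclideanSpace ℝ (Fin p)), ‖Hθθg i x θ u‖ ≤ Lgθ * ‖u‖ := by
    intro i x θ u
    have hl : LipschitzWith ⟨Lgθ, hLgθ0⟩ (gradθg i x) :=
      LipschitzWith.of_dist_le_mul (fun θ1 θ2 => by
        rw [dist_eq_norm, dist_eq_norm]; exact hLgθ i x θ1 θ2)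
    have hn := (hHθθg i x θ).le_of_lipschitz hl
    calc ‖Hθθg i x θ u‖ ≤ ‖Hθθg i x θ‖ * ‖u‖ := (Hθθg i x θ).le_opNorm u
      _ ≤ Lgθ * ‖u‖ := by
          apply mul_le_mul_of_nonneg_right _ (norm_nonneg u)
          exact_mod_cast hn
  have hlo : ∀ i x θ (u : EuclideanSpace ℝ (Fin p)),
      μg * ‖u‖ ^ 2 ≤ @inner ℝ _ _ (Hθθg i x θ u) u :=
    fun i x θ u => hess_lower (hgSC i x) (hgradθg i x) (hHθθg i x θ) u
  have hsymm : ∀ i x θ (u w : EuclideanSpace ℝ (Fin p)),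
      @inner ℝ _ _ (Hθθg i x θ u) w = @inner ℝ _ _ (Hθθg i x θ w) u :=
    fun i x θ u w => hess_symm (hgradθg i x) (hHθθg i x θ) u w
  have hμL : μg ≤ Lgθ := by
    have h1 := hlo i0 xbar 0 u₀
    have h2 := real_inner_le_norm (Hθθg i0 xbar 0 u₀) u₀
    have h3 := hlip i0 xbar 0 u₀
    rw [hu₀] at h1 h2 h3
    nlinarith [h1, h2, h3]
  have hμL2 : 0 < μg + Lgθ := by linarith
  have hlam2 : lam * (μg + Lgθ) ≤ 2 := (le_div_iff₀ hμL2).mp hlam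
  set t : ℝ := μg * lam with htdef
  have ht0 : 0 < t := mul_pos hμg hlam0
  have ht1 : t ≤ 1 := by
    have h := mul_le_mul_of_nonneg_left hμL hlam0.le
    rw [htdef]; nlinarith [h, hlam2]
  have hCfθ0 : 0 ≤ Cfθ := (norm_nonneg _).trans (hCfθ i0 xbar)
  have hM0 : 0 ≤ Cfθ / μg := div_nonneg hCfθ0 hμg.le
  refine le_trans (b := ∑ i, ((1 - t / 3) * (1 - t) * ‖vi i - vstar i xbar‖ ^ 2
      + (2 * lam / μg) * (2 * Lfθ ^ 2 + 4 * (Cfθ / μg) ^ 2 * Lgθθ ^ 2)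
        * (‖xi i - xbar‖ ^ 2 + ‖θi i - θs i xbar‖ ^ 2)))
    (Finset.sum_le_sum (fun i _ => ?_)) (le_of_eq ?_)
  · -- per-index bound
    set Hh := Hθθg i (xi i) (θi i) with hHh
    set Hs := Hθθg i xbar (θs i xbar) with hHs
    set bb := gradθf i (xi i) (θi i) with hbb
    set bs := gradθf i xbar (θs i xbar) with hbs
    set vs := vstar i xbar with hvs
    set Δ : ℝ := ‖xi i - xbar‖ ^ 2 + ‖θi i - θs i xbar‖ ^ 2 with hΔdef
    have hΔ0 : 0 ≤ Δ := by positivity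
    have hHsvs : Hs vs = bs := by
      rw [hvs, hvstar i xbar]
      exact coercive_inverse_apply Hs hμg (hlo i xbar (θs i xbar)) bs
    have hvsn : ‖vs‖ ≤ Cfθ / μg := by
      rcases eq_or_lt_of_le (norm_nonneg vs) with h0 | h0
      · linarith [hM0]
      · have h1 := hlo i xbar (θs i xbar) vs
        rw [hHsvs] at h1
        have h2 := real_inner_le_norm bs vs
        have h3 := hCfθ i xbar
        rw [le_div_iff₀ hμg]
        refine le_of_mul_le_mul_right ?_ h0
        have h4 := mul_le_mul_of_nonneg_right h3 (norm_nonneg vs)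
        nlinarith [h1, h2, h4]
    set u := vi i - vs with hu
    have hcon : ‖u - lam • Hh u‖ ≤ (1 - t) * ‖u‖ := by
      have := contraction_step Hh μg Lgθ lam hμg hμL (hsymm i (xi i) (θi i))
        (hlo i (xi i) (θi i)) (hlip i (xi i) (θi i)) hlam0 hlam2 u
      rwa [show (1:ℝ) - lam * μg = 1 - t by rw [htdef]; ring] at this
    set w : EuclideanSpace ℝ (Fin p) := Hh vs - bs with hw
    have hwn2 : ‖w‖ ^ 2 ≤ (Cfθ / μg) ^ 2 * (Lgθθ ^ 2 * Δ) := by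
      have hww : w = (Hh - Hs) vs := by
        rw [ContinuousLinearMap.sub_apply, hHsvs]
      have h1 : ‖w‖ ≤ ‖Hh - Hs‖ * ‖vs‖ := by
        rw [hww]; exact (Hh - Hs).le_opNorm vs
      have h2 : ‖w‖ ^ 2 ≤ (‖Hh - Hs‖ * ‖vs‖) ^ 2 :=
        pow_le_pow_left₀ (norm_nonneg w) h1 2
      rw [mul_pow] at h2
      have h3 := hLgθθ i (xi i) xbar (θi i) (θs i xbar)
      have h4 : ‖vs‖ ^ 2 ≤ (Cfθ / μg) ^ 2 := pow_le_pow_left₀ (norm_nonneg vs) hvsn 2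
      have h6 := mul_le_mul h3 h4 (sq_nonneg ‖vs‖)
        (mul_nonneg (sq_nonneg Lgθθ) hΔ0)
      linarith [h2, h6]
    have hnb2 : ‖bb - bs‖ ^ 2 ≤ Lfθ ^ 2 * Δ := hLfθ i (xi i) xbar (θi i) (θs i xbar)
    have hid : vi i - lam • Hh (vi i) + lam • bb - vs
        = (u - lam • Hh u) + (lam • (bb - bs) - lam • w) := by
      rw [hu, hw, map_sub]
      module
    set A := ‖u - lam • Hh u‖ with hA
    set En := ‖lam • (bb - bs) - lam • w‖ with hEn
    have hE : En ≤ lam * ‖bb - bs‖ + lam * ‖w‖ := by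
      refine (norm_sub_le _ _).trans ?_
      rw [norm_smul, norm_smul, Real.norm_eq_abs, abs_of_pos hlam0]
    have hLHS : ‖vi i - lam • Hh (vi i) + lam • bb - vs‖ ≤ A + En := by
      rw [hid]; exact norm_add_le _ _
    have hLHS2 : ‖vi i - lam • Hh (vi i) + lam • bb - vs‖ ^ 2 ≤ (A + En) ^ 2 :=
      pow_le_pow_left₀ (norm_nonneg _) hLHS 2
    have hA0 : 0 ≤ A := norm_nonneg _
    have hEn0 : 0 ≤ En := norm_nonneg _
    set U := ‖u‖ with hUdef
    have hU0 : 0 ≤ U := norm_nonneg _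
    exact hLHS2.trans (numeric_combine t lam μg Lfθ Lgθθ Cfθ A En U ‖bb - bs‖ ‖w‖ Δ
      ht0 ht1 hlam0 hμg htdef hΔ0 hA0 hEn0 hU0 (norm_nonneg _) (norm_nonneg _)
      hcon hE hnb2 hwn2)
  · rw [Finset.sum_add_distrib, ← Finset.mul_sum, ← Finset.mul_sum]
end
end

section
/- Consensus contraction: let W ∈ ℝ^{m×m} be symmetric and doubly stochastic with ρ := ‖W − (1/m)1_m1_mᵀ‖² < 1 (squared operator norm), set 𝒲 := W ⊗ I_n and 𝒥 := ((1/m)1_m1_mᵀ) ⊗ I_n. For any x, y ∈ ℝ^{mn}, τ ∈ (0,1) and α > 0, let x⁺ := (1−τ)x + τ(𝒲x − αy). Then ‖x⁺ − 𝒥x⁺‖² ≤ (1 − τ(1−ρ)/2) ‖x − 𝒥x‖² + (2τα²/(1−ρ)) ‖y − 𝒥y‖². -/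
noncomputable section

open Set Finset

variable {E : Type*} [NormedAddCommGroup E] [InnerProductSpace ℝ E]

lemma young_sq (a b : E) {c : ℝ} (hc : 0 < c) :
    ‖a + b‖ ^ 2 ≤ (1 + c) * ‖a‖ ^ 2 + (1 + c⁻¹) * ‖b‖ ^ 2 := by
  have h := norm_add_sq_real a b
  have hi := real_inner_le_norm a b
  have hkey : 2 * ‖a‖ * ‖b‖ ≤ c * ‖a‖ ^ 2 + c⁻¹ * ‖b‖ ^ 2 := by
    have h1 : 0 ≤ c⁻¹ * (c * ‖a‖ - ‖b‖) ^ 2 :=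
      mul_nonneg (inv_pos.2 hc).le (sq_nonneg _)
    have h2 : c * c⁻¹ = 1 := mul_inv_cancel₀ hc.ne'
    nlinarith [h1, h2, sq_nonneg ‖a‖]
  nlinarith [h, hi, hkey]

lemma convex_sq (a b : E) {t : ℝ} (ht0 : 0 ≤ t) (ht1 : t ≤ 1) :
    ‖(1 - t) • a + t • b‖ ^ 2 ≤ (1 - t) * ‖a‖ ^ 2 + t * ‖b‖ ^ 2 := by
  have h := norm_add_sq_real ((1 - t) • a) (t • b)
  rw [real_inner_smul_left, real_inner_smul_right, norm_smul, norm_smul,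
    Real.norm_eq_abs, Real.norm_eq_abs, abs_of_nonneg (by linarith), abs_of_nonneg ht0] at h
  have hi := real_inner_le_norm a b
  nlinarith [h, mul_nonneg (mul_nonneg (by linarith : (0:ℝ) ≤ 1 - t) ht0)
      (sq_nonneg (‖a‖ - ‖b‖)),
    mul_nonneg (mul_nonneg (by linarith : (0:ℝ) ≤ 1 - t) ht0)
      (sub_nonneg.2 hi)]

lemma esp_norm_sq {n : ℕ} (v : EuclideanSpace ℝ (Fin n)) : ‖v‖ ^ 2 = ∑ k, (v k) ^ 2 := by
  rw [EuclideanSpace.norm_eq, Real.sq_sqrt (by positivity)]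
  simp [Real.norm_eq_abs, sq_abs]

lemma kron_bound {m n : ℕ} (M : Matrix (Fin m) (Fin m) ℝ)
    (d : Fin m → EuclideanSpace ℝ (Fin n)) :
    ∑ i, ‖∑ j, M i j • d j‖ ^ 2 ≤
      ‖(Matrix.toEuclideanCLM (𝕜 := ℝ) (n := Fin m) M :
        EuclideanSpace ℝ (Fin m) →L[ℝ] EuclideanSpace ℝ (Fin m))‖ ^ 2 * ∑ i, ‖d i‖ ^ 2 := by
  set T := (Matrix.toEuclideanCLM (𝕜 := ℝ) (n := Fin m) M :
        EuclideanSpace ℝ (Fin m) →L[ℝ] EuclideanSpace ℝ (Fin m))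
  have hLHS : ∑ i, ‖∑ j, M i j • d j‖ ^ 2
      = ∑ k, ‖T ((WithLp.equiv 2 (Fin m → ℝ)).symm (fun j => d j k))‖ ^ 2 := by
    have happ : ∀ i k, (∑ j, M i j • d j) k = ∑ j, M i j * d j k := fun i k =>
      by simp [Finset.sum_apply]
    calc ∑ i, ‖∑ j, M i j • d j‖ ^ 2
        = ∑ i, ∑ k, (∑ j, M i j * d j k) ^ 2 := by
          simp only [esp_norm_sq]
          exact Finset.sum_congr rfl fun i _ => Finset.sum_congr rfl fun k _ => by
            rw [happ i k]
      _ = ∑ k, ∑ i, (∑ j, M i j * d j k) ^ 2 := Finset.sum_comm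
      _ = ∑ k, ‖T ((WithLp.equiv 2 (Fin m → ℝ)).symm (fun j => d j k))‖ ^ 2 := by
          refine Finset.sum_congr rfl fun k _ => ?_
          rw [show T ((WithLp.equiv 2 (Fin m → ℝ)).symm (fun j => d j k))
              = (WithLp.equiv 2 (Fin m → ℝ)).symm (M.mulVec (fun j => d j k)) from
            Matrix.toEuclideanCLM_toLp M _, esp_norm_sq]
          refine (Finset.sum_congr rfl fun i _ => ?_).symm
          simp [Matrix.mulVec, dotProduct]
  rw [hLHS]
  have hRHS : ∑ i, ‖d i‖ ^ 2
      = ∑ k, ‖((WithLp.equiv 2 (Fin m → ℝ)).symm (fun j => d j k) :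
          EuclideanSpace ℝ (Fin m))‖ ^ 2 := by
    calc ∑ i, ‖d i‖ ^ 2 = ∑ i, ∑ k, (d i k) ^ 2 := by simp only [esp_norm_sq]
      _ = ∑ k, ∑ i, (d i k) ^ 2 := Finset.sum_comm
      _ = _ := by
          refine Finset.sum_congr rfl fun k _ => ?_
          rw [esp_norm_sq]
          rfl
  rw [hRHS, Finset.mul_sum]
  refine Finset.sum_le_sum fun k _ => ?_
  have := T.le_opNorm ((WithLp.equiv 2 (Fin m → ℝ)).symm (fun j => d j k))
  nlinarith [norm_nonneg (T ((WithLp.equiv 2 (Fin m → ℝ)).symm (fun j => d j k))),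
    norm_nonneg T, norm_nonneg ((WithLp.equiv 2 (Fin m → ℝ)).symm (fun j => d j k) :
      EuclideanSpace ℝ (Fin m))]

lemma coef1_eq (ρ τ : ℝ) :
    ∀ _ : 0 < 1 - τ * (1 - ρ),
    (1 + τ * (1 - ρ) / (2 * (1 - τ * (1 - ρ)))) * (1 - τ * (1 - ρ)) = 1 - τ * (1 - ρ) / 2 := by
  intro hlam
  field_simp
  ring

lemma coef2_le (ρ τ α : ℝ) (h1ρ : 0 < 1 - ρ) (hτ0 : 0 < τ)
    (hlam : 0 < 1 - τ * (1 - ρ)) :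
    (1 + (τ * (1 - ρ) / (2 * (1 - τ * (1 - ρ))))⁻¹) * (τ * α) ^ 2 ≤ 2 * τ * α ^ 2 / (1 - ρ) := by
  have hμ : (0:ℝ) < τ * (1 - ρ) := by positivity
  have hcinv : (τ * (1 - ρ) / (2 * (1 - τ * (1 - ρ))))⁻¹
      = 2 * (1 - τ * (1 - ρ)) / (τ * (1 - ρ)) := by rw [inv_div]
  rw [hcinv, le_div_iff₀ h1ρ]
  have key : 1 + 2 * (1 - τ * (1 - ρ)) / (τ * (1 - ρ))
      = (2 - τ * (1 - ρ)) / (τ * (1 - ρ)) := by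
    field_simp
    ring
  rw [key, div_mul_eq_mul_div, div_mul_eq_mul_div, div_le_iff₀ hμ]
  nlinarith [mul_nonneg (mul_nonneg (mul_nonneg hμ.le hμ.le) hτ0.le) (sq_nonneg α)]


/-- **Consensus contraction.**  Let `W` be symmetric doubly stochastic with
`ρ := ‖W − (1/m)1 1ᵀ‖² < 1` (squared ℓ²-operator norm).  For blocks
`x_i, y_i ∈ ℝⁿ`, with `x⁺_i := (1−τ)x_i + τ(Σ_j W_{ij} x_j − α y_i)`,
writing `x̄` for the block average (so that `‖x − 𝒥x‖² = Σ_i ‖x_i − x̄‖²`),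
`Σ_i ‖x⁺_i − x̄⁺‖² ≤ (1 − τ(1−ρ)/2) Σ_i ‖x_i − x̄‖² + (2τα²/(1−ρ)) Σ_i ‖y_i − ȳ‖²`. -/
theorem stmt_13 {n m : ℕ}
    (W : Matrix (Fin m) (Fin m) ℝ)
    (hWsymm : W.IsSymm)
    (hWnonneg : ∀ i j, 0 ≤ W i j)
    (hWrow : ∀ i, ∑ j, W i j = 1)
    (hWcol : ∀ j, ∑ i, W i j = 1)
    (ρ : ℝ)
    (hρ : ρ = ‖(Matrix.toEuclideanCLM (𝕜 := ℝ) (n := Fin m)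
        (W - Matrix.of fun _ _ => (m : ℝ)⁻¹) :
        EuclideanSpace ℝ (Fin m) →L[ℝ] EuclideanSpace ℝ (Fin m))‖ ^ 2)
    (hρ1 : ρ < 1)
    (x y : Fin m → EuclideanSpace ℝ (Fin n))
    (τ α : ℝ) (hτ0 : 0 < τ) (hτ1 : τ < 1) (hα : 0 < α)
    (xplus : Fin m → EuclideanSpace ℝ (Fin n))
    (hxplus : ∀ i, xplus i = (1 - τ) • x i + τ • (∑ j, W i j • x j - α • y i)) :
    ∑ i, ‖xplus i - (m : ℝ)⁻¹ • ∑ j, xplus j‖ ^ 2 ≤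
      (1 - τ * (1 - ρ) / 2) * ∑ i, ‖x i - (m : ℝ)⁻¹ • ∑ j, x j‖ ^ 2
      + (2 * τ * α ^ 2 / (1 - ρ)) * ∑ i, ‖y i - (m : ℝ)⁻¹ • ∑ j, y j‖ ^ 2 := by
  set M : Matrix (Fin m) (Fin m) ℝ := W - Matrix.of fun _ _ => (m : ℝ)⁻¹ with hMdef
  set Sx : EuclideanSpace ℝ (Fin n) := ∑ j, x j with hSx
  set Sy : EuclideanSpace ℝ (Fin n) := ∑ j, y j with hSy
  set xb : EuclideanSpace ℝ (Fin n) := (m : ℝ)⁻¹ • Sx with hxb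
  set yb : EuclideanSpace ℝ (Fin n) := (m : ℝ)⁻¹ • Sy with hyb
  -- basic scalar facts
  have hρ0 : 0 ≤ ρ := hρ ▸ sq_nonneg _
  have h1ρ : 0 < 1 - ρ := by linarith
  have hlam : 0 < 1 - τ * (1 - ρ) := by nlinarith
  set c : ℝ := τ * (1 - ρ) / (2 * (1 - τ * (1 - ρ))) with hcdef
  have hc : 0 < c := by positivity
  -- the deviation identity
  have h1 : ∑ j, xplus j = Sx - (τ * α) • Sy := by
    have hWsum : ∑ j, ∑ k, W j k • x k = Sx := by
      rw [Finset.sum_comm]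
      calc ∑ k, ∑ j, W j k • x k = ∑ k, (∑ j, W j k) • x k := by
            refine Finset.sum_congr rfl fun k _ => ?_
            rw [Finset.sum_smul]
        _ = Sx := by simp [hWcol, hSx]
    simp only [hxplus]
    rw [Finset.sum_add_distrib, ← Finset.smul_sum, ← Finset.smul_sum,
      Finset.sum_sub_distrib, hWsum, ← Finset.smul_sum, ← hSy]
    module
  have hdev : ∀ i, xplus i - (m : ℝ)⁻¹ • ∑ j, xplus j
      = ((1 - τ) • (x i - xb) + τ • (∑ j, M i j • (x j - xb)))
        + (-(τ * α)) • (y i - yb) := by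
    intro i
    have hm : (m : ℝ) ≠ 0 := Nat.cast_ne_zero.2 (Fin.pos i).ne'
    have h2 : ∑ j, M i j • (x j - xb) = (∑ j, W i j • x j) - xb := by
      simp only [hMdef, Matrix.sub_apply, Matrix.of_apply, sub_smul, smul_sub]
      rw [Finset.sum_sub_distrib, Finset.sum_sub_distrib, Finset.sum_sub_distrib,
        ← Finset.sum_smul, hWrow i, ← Finset.smul_sum, ← hSx,
        Finset.sum_const, Finset.card_fin, one_smul]
      rw [hxb, ← Nat.cast_smul_eq_nsmul ℝ, smul_smul, smul_smul, mul_inv_cancel₀ hm]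
      module
    rw [hxplus i, h1, h2, hxb, hyb]
    module
  -- norms
  have hBnorm : ∀ i, ‖(-(τ * α)) • (y i - yb)‖ ^ 2 = (τ * α) ^ 2 * ‖y i - yb‖ ^ 2 := by
    intro i
    rw [norm_smul, Real.norm_eq_abs, abs_neg, abs_of_nonneg (by positivity), mul_pow]
  set D : ℝ := ∑ i, ‖x i - xb‖ ^ 2 with hD
  set G : ℝ := ∑ i, ‖y i - yb‖ ^ 2 with hG
  have hD0 : 0 ≤ D := Finset.sum_nonneg fun i _ => sq_nonneg _
  have hG0 : 0 ≤ G := Finset.sum_nonneg fun i _ => sq_nonneg _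
  have hF : ∑ i, ‖∑ j, M i j • (x j - xb)‖ ^ 2 ≤ ρ * D := by
    have := kron_bound (m := m) (n := n) M (fun j => x j - xb)
    rw [← hρ] at this
    exact this
  have hA : ∑ i, ‖(1 - τ) • (x i - xb) + τ • (∑ j, M i j • (x j - xb))‖ ^ 2
      ≤ (1 - τ * (1 - ρ)) * D := by
    have step : ∑ i, ‖(1 - τ) • (x i - xb) + τ • (∑ j, M i j • (x j - xb))‖ ^ 2
        ≤ ∑ i, ((1 - τ) * ‖x i - xb‖ ^ 2 + τ * ‖∑ j, M i j • (x j - xb)‖ ^ 2) :=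
      Finset.sum_le_sum fun i _ => convex_sq _ _ hτ0.le hτ1.le
    rw [Finset.sum_add_distrib, ← Finset.mul_sum, ← Finset.mul_sum] at step
    have := mul_le_mul_of_nonneg_left hF hτ0.le
    nlinarith
  -- main chain
  calc ∑ i, ‖xplus i - (m : ℝ)⁻¹ • ∑ j, xplus j‖ ^ 2
      = ∑ i, ‖((1 - τ) • (x i - xb) + τ • (∑ j, M i j • (x j - xb)))
          + (-(τ * α)) • (y i - yb)‖ ^ 2 := by
        exact Finset.sum_congr rfl fun i _ => by rw [hdev i]
    _ ≤ ∑ i, ((1 + c) * ‖(1 - τ) • (x i - xb) + τ • (∑ j, M i j • (x j - xb))‖ ^ 2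
          + (1 + c⁻¹) * ‖(-(τ * α)) • (y i - yb)‖ ^ 2) :=
        Finset.sum_le_sum fun i _ => young_sq _ _ hc
    _ = (1 + c) * ∑ i, ‖(1 - τ) • (x i - xb) + τ • (∑ j, M i j • (x j - xb))‖ ^ 2
          + (1 + c⁻¹) * ((τ * α) ^ 2 * G) := by
        rw [Finset.sum_add_distrib, ← Finset.mul_sum, ← Finset.mul_sum]
        have hBG : ∑ i, ‖(-(τ * α)) • (y i - yb)‖ ^ 2 = (τ * α) ^ 2 * G := by
          rw [hG, Finset.mul_sum]
          exact Finset.sum_congr rfl fun i _ => hBnorm i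
        rw [hBG]
    _ ≤ (1 + c) * ((1 - τ * (1 - ρ)) * D) + (1 + c⁻¹) * ((τ * α) ^ 2 * G) := by
        exact add_le_add (mul_le_mul_of_nonneg_left hA (by linarith)) le_rfl
    _ ≤ (1 - τ * (1 - ρ) / 2) * D + (2 * τ * α ^ 2 / (1 - ρ)) * G := by
        have hcoef1 : (1 + c) * (1 - τ * (1 - ρ)) = 1 - τ * (1 - ρ) / 2 :=
          hcdef ▸ coef1_eq ρ τ hlam
        have hcoef2 : (1 + c⁻¹) * (τ * α) ^ 2 ≤ 2 * τ * α ^ 2 / (1 - ρ) :=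
          hcdef ▸ coef2_le ρ τ α h1ρ hτ0 hlam
        have e1 : (1 + c) * ((1 - τ * (1 - ρ)) * D) = (1 - τ * (1 - ρ) / 2) * D := by
          rw [← mul_assoc, hcoef1]
        rw [e1]
        have e2 : (1 + c⁻¹) * ((τ * α) ^ 2 * G) = ((1 + c⁻¹) * (τ * α) ^ 2) * G := by ring
        rw [e2]
        exact add_le_add le_rfl (mul_le_mul_of_nonneg_right hcoef2 hG0)
end
end

section
/- Momentum variance recursion: let (Ω,𝔽,P) be a probability space and 𝒢 ⊆ 𝔽 a sub-σ-algebra. Let Φ : ℝⁿ → ℝ be differentiable with L-Lipschitz gradient, γ ∈ (0,1), τ, α > 0. Let x̄, z̄, ȳ be 𝒢-measurable ℝⁿ-valued random vectors and s̄ a square-integrable ℝⁿ-valued random vector with E[‖s̄ − E[s̄|𝒢]‖² | 𝒢] ≤ σ̄² almost surely for a 𝒢-measurable σ̄² ≥ 0. Set x̄⁺ := x̄ − τα ȳ and z̄⁺ := s̄ + (1−γ)(z̄ − s̄). Then almost surely E[‖∇Φ(x̄⁺) − z̄⁺‖² | 𝒢] ≤ (1−γ)‖∇Φ(x̄) − z̄‖²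 + 2γ‖∇Φ(x̄) − E[s̄|𝒢]‖² + (2L²/γ) τ²α² ‖ȳ‖² + γ² σ̄². -/
noncomputable section

open MeasureTheory

section AuxStmt16

variable {Ω : Type*} {𝒢 m0' : MeasurableSpace Ω} {μ : Measure Ω}
  {E : Type*} [NormedAddCommGroup E] [InnerProductSpace ℝ E] [CompleteSpace E]

private lemma aux16_int_mul [IsFiniteMeasure μ] {f g : Ω → ℝ} (hf : MemLp f 2 μ)
    (hg : MemLp g 2 μ) : Integrable (fun ω => f ω * g ω) μ := by
  have h := L2.integrable_inner (𝕜 := ℝ) (hf.toLp f) (hg.toLp g)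
  refine h.congr ?_
  filter_upwards [hf.coeFn_toLp, hg.coeFn_toLp] with ω h1 h2
  simp [h1, h2, RCLike.inner_apply]
  ring

private lemma aux16_int_inner [IsFiniteMeasure μ] {f g : Ω → E} (hf : MemLp f 2 μ)
    (hg : MemLp g 2 μ) : Integrable (fun ω => (inner ℝ (f ω) (g ω) : ℝ)) μ := by
  have h := L2.integrable_inner (𝕜 := ℝ) (hf.toLp f) (hg.toLp g)
  refine h.congr ?_
  filter_upwards [hf.coeFn_toLp, hg.coeFn_toLp] with ω h1 h2
  rw [h1, h2]

private lemma aux16_memℒp_condexp [IsFiniteMeasure μ] (h𝒢 : 𝒢 ≤ m0')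
    {f : Ω → E} (hf : MemLp f 2 μ) : MemLp (μ[f|𝒢]) 2 μ := by
  haveI : SigmaFinite (μ.trim h𝒢) := inferInstance
  have hae : (condExpL2 E ℝ h𝒢 (hf.toLp f) : Ω → E) =ᵐ[μ] μ[f|𝒢] := by
    refine ae_eq_condExp_of_forall_setIntegral_eq h𝒢 (hf.integrable one_le_two)
      (fun s hs hμs => integrableOn_condExpL2_of_measure_ne_top h𝒢 hμs.ne _) ?_ ?_
    · intro s hs hμs
      rw [integral_condExpL2_eq h𝒢 (hf.toLp f) hs hμs.ne]
      exact setIntegral_congr_ae (h𝒢 s hs) ((hf.coeFn_toLp).mono fun x hx _ => hx)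
    · exact aestronglyMeasurable_condExpL2 h𝒢 _
  exact (Lp.memLp _).ae_eq hae

private lemma aux16_condexp_apply [IsFiniteMeasure μ] (h𝒢 : 𝒢 ≤ m0') {n : ℕ}
    {f : Ω → EuclideanSpace ℝ (Fin n)} (hf : Integrable f μ) (i : Fin n) :
    μ[(fun ω => f ω i)|𝒢] =ᵐ[μ] fun ω => (μ[f|𝒢]) ω i := by
  haveI : SigmaFinite (μ.trim h𝒢) := inferInstance
  have hfi : Integrable (fun ω => f ω i) μ := by
    simpa using (EuclideanSpace.proj (𝕜 := ℝ) i).integrable_comp hf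
  refine (ae_eq_condExp_of_forall_setIntegral_eq h𝒢 hfi ?_ ?_ ?_).symm
  · intro s hs hμs
    exact (by simpa using
      (EuclideanSpace.proj (𝕜 := ℝ) i).integrable_comp (integrable_condExp (f := f) (m := 𝒢))
        : Integrable (fun ω => (μ[f|𝒢]) ω i) μ).integrableOn
  · intro s hs hμs
    have h1 : ∫ x in s, (μ[f|𝒢]) x i ∂μ
        = EuclideanSpace.proj (𝕜 := ℝ) i (∫ x in s, (μ[f|𝒢]) x ∂μ) := by
      simpa using
        (EuclideanSpace.proj (𝕜 := ℝ) i).integral_comp_comm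
          (integrable_condExp.integrableOn (s := s))
    have h2 : ∫ x in s, f x i ∂μ = EuclideanSpace.proj (𝕜 := ℝ) i (∫ x in s, f x ∂μ) := by
      simpa using
        (EuclideanSpace.proj (𝕜 := ℝ) i).integral_comp_comm (hf.integrableOn (s := s))
    rw [h1, h2, setIntegral_condExp h𝒢 hf hs]
  · refine StronglyMeasurable.aestronglyMeasurable ?_
    exact (EuclideanSpace.proj (𝕜 := ℝ) i).continuous.comp_stronglyMeasurable
      stronglyMeasurable_condExp

private lemma aux16_condexp_inner_zero [IsProbabilityMeasure μ] (h𝒢 : 𝒢 ≤ m0') {n : ℕ}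
    {A N : Ω → EuclideanSpace ℝ (Fin n)} (hASM : StronglyMeasurable[𝒢] A)
    (hA : MemLp A 2 μ) (hN : MemLp N 2 μ) (hNzero : μ[N|𝒢] =ᵐ[μ] 0) :
    μ[(fun ω => @inner ℝ _ _ (A ω) (N ω))|𝒢] =ᵐ[μ] 0 := by
  have hsum : (fun ω => @inner ℝ _ _ (A ω) (N ω))
      = ∑ i : Fin n, ((fun ω => A ω i) * fun ω => N ω i) := by
    funext ω
    simp [PiLp.inner_apply, RCLike.inner_apply, Finset.sum_apply]
    exact Finset.sum_congr rfl (fun _ _ => mul_comm _ _)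
  rw [hsum]
  have hAi2 : ∀ i : Fin n, MemLp (fun ω => A ω i) 2 μ := fun i => by
    simpa [Function.comp_def] using (EuclideanSpace.proj (𝕜 := ℝ) i).comp_memLp' hA
  have hNi2 : ∀ i : Fin n, MemLp (fun ω => N ω i) 2 μ := fun i => by
    simpa [Function.comp_def] using (EuclideanSpace.proj (𝕜 := ℝ) i).comp_memLp' hN
  have hint : ∀ i : Fin n, Integrable ((fun ω => A ω i) * fun ω => N ω i) μ := fun i =>
    aux16_int_mul (hAi2 i) (hNi2 i)
  refine (condExp_finsetSum (fun i _ => hint i) 𝒢).trans ?_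
  have hterm : ∀ i : Fin n,
      μ[((fun ω => A ω i) * fun ω => N ω i)|𝒢] =ᵐ[μ] 0 := by
    intro i
    have hAiSM : StronglyMeasurable[𝒢] (fun ω => A ω i) :=
      (EuclideanSpace.proj (𝕜 := ℝ) i).continuous.comp_stronglyMeasurable hASM
    have hmul := condExp_mul_of_stronglyMeasurable_left hAiSM (hint i) ((hNi2 i).integrable one_le_two)
    have hNic := aux16_condexp_apply h𝒢 (hN.integrable one_le_two) i
    filter_upwards [hmul, hNic, hNzero] with ω h1 h2 h3
    simp only [Pi.mul_apply, Pi.zero_apply] at h1 h3 ⊢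
    rw [h1, h2, h3]
    simp
  filter_upwards [ae_all_iff.2 hterm] with ω h
  simp only [Finset.sum_apply, Pi.zero_apply]
  exact Finset.sum_eq_zero fun i _ => by simpa using h i

private lemma aux16_det {F : Type*} [NormedAddCommGroup F] [InnerProductSpace ℝ F]
    (γ : ℝ) (hγ0 : 0 < γ) (hγ1 : γ < 1) (d1 d2 e : F) (c : ℝ) (he : ‖e‖ ≤ c) :
    ‖(1 - γ) • d1 + (γ • d2 + e)‖ ^ 2
      ≤ (1 - γ) * ‖d1‖ ^ 2 + 2 * γ * ‖d2‖ ^ 2 + (2 / γ) * c ^ 2 := by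
  have hc : (0:ℝ) ≤ c := le_trans (norm_nonneg e) he
  have h1γ : (0:ℝ) ≤ 1 - γ := by linarith
  have hn1 : ‖(1 - γ) • d1‖ = (1 - γ) * ‖d1‖ := by
    rw [norm_smul, Real.norm_eq_abs, abs_of_nonneg h1γ]
  have hn2 : ‖γ • d2‖ = γ * ‖d2‖ := by
    rw [norm_smul, Real.norm_eq_abs, abs_of_nonneg hγ0.le]
  have F1 : ‖(1 - γ) • d1 + (γ • d2 + e)‖ ^ 2 ≤ ((1 - γ) * ‖d1‖ + ‖γ • d2 + e‖) ^ 2 := by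
    have h := norm_add_le ((1 - γ) • d1) (γ • d2 + e)
    rw [hn1] at h
    exact pow_le_pow_left₀ (norm_nonneg _) h 2
  have F2 : γ * (((1 - γ) * ‖d1‖ + ‖γ • d2 + e‖) ^ 2)
      ≤ γ * (1 - γ) * ‖d1‖ ^ 2 + ‖γ • d2 + e‖ ^ 2 := by
    nlinarith [mul_nonneg h1γ (sq_nonneg (γ * ‖d1‖ - ‖γ • d2 + e‖))]
  have F3 : ‖γ • d2 + e‖ ^ 2 ≤ 2 * γ ^ 2 * ‖d2‖ ^ 2 + 2 * ‖e‖ ^ 2 := by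
    have h := norm_add_le (γ • d2) e
    rw [hn2] at h
    have h' : ‖γ • d2 + e‖ ^ 2 ≤ (γ * ‖d2‖ + ‖e‖) ^ 2 := pow_le_pow_left₀ (norm_nonneg _) h 2
    nlinarith [sq_nonneg (γ * ‖d2‖ - ‖e‖)]
  have F4 : ‖e‖ ^ 2 ≤ c ^ 2 := pow_le_pow_left₀ (norm_nonneg e) he 2
  rw [← mul_le_mul_iff_right₀ hγ0]
  have hdivc : γ * ((2 / γ) * c ^ 2) = 2 * c ^ 2 := by field_simp
  have F1' := mul_le_mul_of_nonneg_left F1 hγ0.le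
  nlinarith [F1', F2, F3, F4, hdivc]

end AuxStmt16

/-- **Momentum variance recursion.**  With `x̄⁺ := x̄ − τα ȳ` and
`z̄⁺ := s̄ + (1−γ)(z̄ − s̄)`, if `E[‖s̄ − E[s̄|𝒢]‖²|𝒢] ≤ σ̄²` a.s. then a.s.
`E[‖∇Φ(x̄⁺) − z̄⁺‖²|𝒢] ≤ (1−γ)‖∇Φ(x̄) − z̄‖² + 2γ‖∇Φ(x̄) − E[s̄|𝒢]‖²
  + (2L²/γ)τ²α²‖ȳ‖² + γ²σ̄²`. -/
theorem stmt_16 {n : ℕ} {Ω : Type*} {m0 : MeasurableSpace Ω}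
    (μ : Measure Ω) [IsProbabilityMeasure μ]
    (𝒢 : MeasurableSpace Ω) (h𝒢 : 𝒢 ≤ m0)
    (Φ : EuclideanSpace ℝ (Fin n) → ℝ)
    (Φ' : EuclideanSpace ℝ (Fin n) → EuclideanSpace ℝ (Fin n))
    (L : ℝ)
    (hΦ : ∀ x, HasGradientAt Φ (Φ' x) x)
    (hL : ∀ u w, ‖Φ' u - Φ' w‖ ≤ L * ‖u - w‖)
    (γ τ α : ℝ) (hγ0 : 0 < γ) (hγ1 : γ < 1) (hτ : 0 < τ) (hα : 0 < α)
    (xbar zbar ybar : Ω → EuclideanSpace ℝ (Fin n))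
    (hxbar : StronglyMeasurable[𝒢] xbar)
    (hzbar : StronglyMeasurable[𝒢] zbar)
    (hybar : StronglyMeasurable[𝒢] ybar)
    (sbar : Ω → EuclideanSpace ℝ (Fin n))
    (hsbar : MemLp sbar 2 μ)
    (σbar2 : Ω → ℝ) (hσmeas : StronglyMeasurable[𝒢] σbar2)
    (hσnn : ∀ ω, 0 ≤ σbar2 ω)
    (hvar : ∀ᵐ ω ∂μ,
      (μ[(fun ω' => ‖sbar ω' - (μ[sbar|𝒢]) ω'‖ ^ 2)|𝒢]) ω ≤ σbar2 ω)
    (xplus zplus : Ω → EuclideanSpace ℝ (Fin n))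
    (hxplus : ∀ ω, xplus ω = xbar ω - (τ * α) • ybar ω)
    (hzplus : ∀ ω, zplus ω = sbar ω + (1 - γ) • (zbar ω - sbar ω)) :
    ∀ᵐ ω ∂μ,
      (μ[(fun ω' => ‖Φ' (xplus ω') - zplus ω'‖ ^ 2)|𝒢]) ω ≤
        (1 - γ) * ‖Φ' (xbar ω) - zbar ω‖ ^ 2
        + 2 * γ * ‖Φ' (xbar ω) - (μ[sbar|𝒢]) ω‖ ^ 2
        + (2 * L ^ 2 / γ) * τ ^ 2 * α ^ 2 * ‖ybar ω‖ ^ 2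
        + γ ^ 2 * σbar2 ω := by
  haveI : SigmaFinite (μ.trim h𝒢) := inferInstance
  have h1γ : (0:ℝ) ≤ 1 - γ := by linarith
  by_cases hint : Integrable (fun ω' => ‖Φ' (xplus ω') - zplus ω'‖ ^ 2) μ
  swap
  · rw [condExp_of_not_integrable hint]
    filter_upwards with ω
    simp only [Pi.zero_apply]
    have t1 : 0 ≤ (1 - γ) * ‖Φ' (xbar ω) - zbar ω‖ ^ 2 := mul_nonneg h1γ (by positivity)
    have t2 : 0 ≤ 2 * γ * ‖Φ' (xbar ω) - (μ[sbar|𝒢]) ω‖ ^ 2 :=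
      mul_nonneg (by linarith) (by positivity)
    have t3 : 0 ≤ (2 * L ^ 2 / γ) * τ ^ 2 * α ^ 2 * ‖ybar ω‖ ^ 2 :=
      mul_nonneg (mul_nonneg (mul_nonneg (div_nonneg (by positivity) hγ0.le) (sq_nonneg τ))
        (sq_nonneg α)) (by positivity)
    have t4 : 0 ≤ γ ^ 2 * σbar2 ω := mul_nonneg (sq_nonneg γ) (hσnn ω)
    linarith
  -- main case
  have hΦ'cont : Continuous Φ' := by
    have hlip : LipschitzWith (Real.toNNReal (max L 0)) Φ' := by
      apply LipschitzWith.of_dist_le_mul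
      intro u w
      rw [dist_eq_norm, dist_eq_norm, Real.coe_toNNReal _ (le_max_right L 0)]
      calc ‖Φ' u - Φ' w‖ ≤ L * ‖u - w‖ := hL u w
        _ ≤ max L 0 * ‖u - w‖ := mul_le_mul_of_nonneg_right (le_max_left _ _) (norm_nonneg _)
    exact hlip.continuous
  set mE : Ω → EuclideanSpace ℝ (Fin n) := μ[sbar|𝒢] with hmE_def
  have hmE_SM : StronglyMeasurable[𝒢] mE := stronglyMeasurable_condExp
  have hmE_L2 : MemLp mE 2 μ := aux16_memℒp_condexp h𝒢 hsbar
  have hmE_int : Integrable mE μ := integrable_condExp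
  set N : Ω → EuclideanSpace ℝ (Fin n) := fun ω => sbar ω - mE ω with hN_def
  have hN_L2 : MemLp N 2 μ := hsbar.sub hmE_L2
  have hNzero : μ[N|𝒢] =ᵐ[μ] 0 := by
    have h1 : μ[N|𝒢] =ᵐ[μ] μ[sbar|𝒢] - μ[mE|𝒢] :=
      condExp_sub (hsbar.integrable one_le_two) hmE_int 𝒢
    have h2 : μ[mE|𝒢] = mE := condExp_of_stronglyMeasurable h𝒢 hmE_SM hmE_int
    refine h1.trans ?_
    rw [h2, ← hmE_def, sub_self]
  have hxplusSM : StronglyMeasurable[𝒢] xplus := by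
    have hx : xplus = fun ω => xbar ω - (τ * α) • ybar ω := funext hxplus
    rw [hx]; exact hxbar.sub (hybar.const_smul (τ * α))
  set g : Ω → EuclideanSpace ℝ (Fin n) := fun ω => Φ' (xplus ω) with hg_def
  have hgSM : StronglyMeasurable[𝒢] g := hΦ'cont.comp_stronglyMeasurable hxplusSM
  set A : Ω → EuclideanSpace ℝ (Fin n) :=
    fun ω => g ω - (1 - γ) • zbar ω - γ • mE ω with hA_def
  have hASM : StronglyMeasurable[𝒢] A :=
    (hgSM.sub (hzbar.const_smul (1 - γ))).sub (hmE_SM.const_smul γ)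
  have hfAN : ∀ ω, Φ' (xplus ω) - zplus ω = A ω - γ • N ω := by
    intro ω
    rw [hzplus]
    simp only [hA_def, hN_def, hg_def]
    module
  have hfL2 : MemLp (fun ω => Φ' (xplus ω) - zplus ω) 2 μ := by
    refine (memLp_two_iff_integrable_sq_norm ?_).2 hint
    have h1 : StronglyMeasurable[m0] g := hgSM.mono h𝒢
    have hzplusAE : AEStronglyMeasurable[m0] zplus μ := by
      have hz : zplus = fun ω => sbar ω + (1 - γ) • (zbar ω - sbar ω) := funext hzplus
      rw [hz]
      exact hsbar.aestronglyMeasurable.add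
        ((((hzbar.mono h𝒢).aestronglyMeasurable).sub hsbar.aestronglyMeasurable).const_smul (1 - γ))
    exact h1.aestronglyMeasurable.sub hzplusAE
  have hA_L2 : MemLp A 2 μ := by
    have hAe : A = fun ω => (Φ' (xplus ω) - zplus ω) + γ • N ω := by
      funext ω
      rw [hfAN ω]
      abel
    rw [hAe]
    exact hfL2.add (hN_L2.const_smul γ)
  have ihA2 : Integrable (fun ω => ‖A ω‖ ^ 2) μ :=
    (memLp_two_iff_integrable_sq_norm hA_L2.1).1 hA_L2
  have ihN2 : Integrable (fun ω => ‖N ω‖ ^ 2) μ :=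
    (memLp_two_iff_integrable_sq_norm hN_L2.1).1 hN_L2
  have ihR : Integrable (fun ω => (inner ℝ (A ω) (N ω) : ℝ)) μ := aux16_int_inner hA_L2 hN_L2
  have hRzero := aux16_condexp_inner_zero h𝒢 hASM hA_L2 hN_L2 hNzero
  have hPSM : StronglyMeasurable[𝒢] (fun ω => ‖A ω‖ ^ 2) :=
    (continuous_pow 2).comp_stronglyMeasurable hASM.norm
  have hPcond : μ[(fun ω => ‖A ω‖ ^ 2)|𝒢] = fun ω => ‖A ω‖ ^ 2 :=
    condExp_of_stronglyMeasurable h𝒢 hPSM ihA2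
  have hvar' : ∀ᵐ ω ∂μ, (μ[(fun ω' => ‖N ω'‖ ^ 2)|𝒢]) ω ≤ σbar2 ω := by
    simpa only [hN_def] using hvar
  have hF_eq : (fun ω' => ‖Φ' (xplus ω') - zplus ω'‖ ^ 2)
      = ((fun ω => ‖A ω‖ ^ 2) + (γ ^ 2) • fun ω => ‖N ω‖ ^ 2)
        - (2 * γ) • fun ω => (inner ℝ (A ω) (N ω) : ℝ) := by
    funext ω
    simp only [Pi.sub_apply, Pi.add_apply, Pi.smul_apply, smul_eq_mul]
    rw [hfAN ω, norm_sub_sq_real, real_inner_smul_right, norm_smul, Real.norm_eq_abs,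
      mul_pow, sq_abs]
    ring
  have hG1int : Integrable ((fun ω => ‖A ω‖ ^ 2) + (γ ^ 2) • fun ω => ‖N ω‖ ^ 2) μ :=
    ihA2.add (ihN2.smul _)
  have hG2int : Integrable ((2 * γ) • fun ω => (inner ℝ (A ω) (N ω) : ℝ)) μ := ihR.smul _
  have hsub := condExp_sub (μ := μ) (m := 𝒢) hG1int hG2int
  have hadd := condExp_add (μ := μ) (m := 𝒢) ihA2 (ihN2.smul ((γ : ℝ) ^ 2))
  have hsm1 := condExp_smul (μ := μ) (m := 𝒢) ((γ : ℝ) ^ 2) (fun ω => ‖N ω‖ ^ 2)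
  have hsm2 := condExp_smul (μ := μ) (m := 𝒢) (2 * γ) (fun ω => (inner ℝ (A ω) (N ω) : ℝ))
  rw [hF_eq]
  filter_upwards [hsub, hadd, hsm1, hsm2, hRzero, hvar'] with ω e1 e2 e3 e4 e5 e6
  rw [e1]
  simp only [Pi.sub_apply, Pi.add_apply, Pi.smul_apply, Pi.zero_apply, smul_eq_mul] at e2 e3 e4 e5 ⊢
  rw [e2, e3, e4, e5, hPcond]
  have hdet : ‖A ω‖ ^ 2 ≤ (1 - γ) * ‖Φ' (xbar ω) - zbar ω‖ ^ 2
      + 2 * γ * ‖Φ' (xbar ω) - mE ω‖ ^ 2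
      + (2 / γ) * (L * (τ * α * ‖ybar ω‖)) ^ 2 := by
    have hAdecomp : A ω = (1 - γ) • (Φ' (xbar ω) - zbar ω)
        + (γ • (Φ' (xbar ω) - mE ω) + (Φ' (xplus ω) - Φ' (xbar ω))) := by
      simp only [hA_def, hg_def]
      module
    have he : ‖Φ' (xplus ω) - Φ' (xbar ω)‖ ≤ L * (τ * α * ‖ybar ω‖) := by
      refine (hL _ _).trans (le_of_eq ?_)
      rw [hxplus ω]
      have hx : xbar ω - (τ * α) • ybar ω - xbar ω = -((τ * α) • ybar ω) := by abel
      rw [hx, norm_neg, norm_smul, Real.norm_eq_abs, abs_of_pos (by positivity)]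
    rw [hAdecomp]
    exact aux16_det γ hγ0 hγ1 _ _ _ _ he
  have hQb : γ ^ 2 * (μ[(fun ω' => ‖N ω'‖ ^ 2)|𝒢]) ω ≤ γ ^ 2 * σbar2 ω :=
    mul_le_mul_of_nonneg_left e6 (sq_nonneg γ)
  have hring : (2 / γ) * (L * (τ * α * ‖ybar ω‖)) ^ 2
      = (2 * L ^ 2 / γ) * τ ^ 2 * α ^ 2 * ‖ybar ω‖ ^ 2 := by ring
  linarith
end
end
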